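/- arXiv:2409.03903 — 6 statements merged into one kernel-verified Lean document; each statement's English description precedes it below -/
import Mathlib

section
/- Let q ≥ 2 and k ≥ 2 be integers and let I be a maximization instance of k CSP-q with n variables and opt(I) ≠ wor(I) that admits a strong coloring with ν colors, where ν ≥ k. Suppose there exists an orthogonal array OA(R, ν, q, k) with entries in Σ_q in which some word u ∈ Σ_q^ν occurs as a row exactly R* > 0 times. Then the average differential ratio of I is at least R*/R; equivalently, E[v(I,X)] ≥ (R*/R)·opt(I) + (1 − R*/R)·wor(I). -/
/-- An instance of the (maximization) problem `k CSP-q` with `n` variables: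
`m` weighted constraints, where constraint `i` has positive weight `w i`,
arity `arity i ≤ k`, a strictly increasing tuple `idx i` of indices of the
variables it depends on, and a constraint function `P i : Σ_q^{arity i} → ℝ`. -/
structure CSPInstance (q k n : ℕ) where
  m : ℕ
  w : Fin m → ℝ
  w_pos : ∀ i, 0 < w i
  arity : Fin m → ℕ
  arity_le : ∀ i, arity i ≤ k
  idx : (i : Fin m) → Fin (arity i) → Fin n
  idx_mono : ∀ i, StrictMono (idx i)
  P : (i : Fin m) → ((Fin (arity i) → Fin q) → ℝ)

namespace CSPInstance

variable {q k n : ℕ}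

/-- The objective value `v(I, x)` of a solution `x ∈ Σ_q^n`. -/
def value (I : CSPInstance q k n) (x : Fin n → Fin q) : ℝ :=
  ∑ i : Fin I.m, I.w i * I.P i (fun s => x (I.idx i s))

/-- `opt(I)`, the best (maximum) objective value. -/
noncomputable def opt (I : CSPInstance q k n) : ℝ := sSup (Set.range I.value)

/-- `wor(I)`, the worst (minimum) objective value. -/
noncomputable def wor (I : CSPInstance q k n) : ℝ := sInf (Set.range I.value)

/-- `E[v(I,X)]`, the average objective value over all `q^n` solutions. -/
noncomputable def avg (I : CSPInstance q k n) : ℝ :=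
  (∑ x : Fin n → Fin q, I.value x) / (q : ℝ) ^ n

/-- A strong coloring of `I` with `ν` colors: an assignment of colors to variables such
that the support of each constraint meets each color class in at most one index. -/
def StrongColoring (I : CSPInstance q k n) (ν : ℕ) : Prop :=
  ∃ c : Fin n → Fin ν, ∀ i : Fin I.m, Function.Injective (fun s => c (I.idx i s))

end CSPInstance

/-- `M` is an orthogonal array `OA(R, ν, q, t)`: for every `t` pairwise distinct columns
`c 0 < ... < c (t-1)` and every word `v ∈ Σ_q^t`, exactly `R / q^t` rows of `M` restrict to
`v` on these columns. -/
def IsOA (R ν q t : ℕ) (M : Fin R → Fin ν → Fin q) : Prop :=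
  ∀ c : Fin t → Fin ν, StrictMono c → ∀ v : Fin t → Fin q,
    (Finset.univ.filter fun r => ∀ s, M r (c s) = v s).card * q ^ t = R

/-! Let `x` be an optimal assignment and `c` a strong coloring. Each row `M r` of the array
yields the assignment `x - u ∘ c + M r ∘ c`: the `R*` rows equal to `u` yield `x`, all others are
worth at least `wor(I)`. As `c` is injective on every constraint support and `M` has strength `k`,
on each support these `R` assignments are distributed exactly like a uniformly random one, so by
linearity their average value is `E[v(I,X)]`. -/

open Finset

section Equidistributed

variable {ρ ρ' β γ : Type*} [Fintype ρ] [Fintype ρ'] [Fintype β] [Fintype γ]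

/-- All fibers of `g` have the same size; phrased through sums of test functions, so that it
composes. -/
def Equidistributed (g : ρ → β) : Prop :=
  ∀ f : β → ℝ, (∑ r, f (g r)) * Fintype.card β = Fintype.card ρ * ∑ b, f b

lemma equidistributed_of_card_fiber [DecidableEq β] {g : ρ → β}
    (h : ∀ b, #{r | g r = b} * Fintype.card β = Fintype.card ρ) : Equidistributed g := by
  intro f
  rw [← Finset.sum_fiberwise univ g, Finset.sum_mul, Finset.mul_sum]
  refine Finset.sum_congr rfl fun b _ => ?_
  rw [Finset.sum_congr rfl fun r hr => by rw [(Finset.mem_filter.1 hr).2], Finset.sum_const,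
    nsmul_eq_mul, ← h b]
  push_cast
  ring

lemma Equiv.equidistributed (e : β ≃ γ) : Equidistributed e := by
  intro f
  rw [e.sum_comp f, Fintype.card_congr e, mul_comm]

lemma equidistributed_fst : Equidistributed (Prod.fst : β × γ → β) := by
  intro f
  simp only [Fintype.sum_prod_type, Finset.sum_const, Finset.card_univ, nsmul_eq_mul,
    Fintype.card_prod, ← Finset.mul_sum]
  push_cast
  ring

lemma Equidistributed.comp {g : ρ → β} {π : β → γ} (hπ : Equidistributed π)
    (hg : Equidistributed g) : Equidistributed (π ∘ g) := by
  intro f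
  rcases isEmpty_or_nonempty β with _ | _
  · have : IsEmpty ρ := g.isEmpty
    simp
  have hg' := hg (f ∘ π)
  simp only [Function.comp_apply] at hg' ⊢
  apply mul_right_cancel₀ (Nat.cast_ne_zero.2 Fintype.card_ne_zero : (Fintype.card β : ℝ) ≠ 0)
  calc (∑ r, f (π (g r))) * Fintype.card γ * Fintype.card β
      = (∑ r, f (π (g r))) * Fintype.card β * Fintype.card γ := by ring
    _ = Fintype.card ρ * ((∑ b, f (π b)) * Fintype.card γ) := by rw [hg']; ring
    _ = Fintype.card ρ * (∑ c, f c) * Fintype.card β := by rw [hπ]; ring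

lemma Equidistributed.sum_comp_mul_card_eq [Nonempty β] {g₁ : ρ → β} {g₂ : ρ' → β}
    (h₁ : Equidistributed g₁) (h₂ : Equidistributed g₂) (f : β → ℝ) :
    (∑ r, f (g₁ r)) * Fintype.card ρ' = Fintype.card ρ * ∑ r, f (g₂ r) := by
  apply mul_right_cancel₀ (Nat.cast_ne_zero.2 Fintype.card_ne_zero : (Fintype.card β : ℝ) ≠ 0)
  calc (∑ r, f (g₁ r)) * Fintype.card ρ' * Fintype.card β
      = (∑ r, f (g₁ r)) * Fintype.card β * Fintype.card ρ' := by ring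
    _ = Fintype.card ρ * ((∑ r, f (g₂ r)) * Fintype.card β) := by rw [h₁, h₂]; ring
    _ = _ := by ring

end Equidistributed

section OrthogonalArray

variable {ρ ι α : Type*} [Fintype ρ] [Fintype ι] [LinearOrder ι] [Fintype α]

lemma equidistributed_comp_injective_of_strictMono {M : ρ → ι → α} {t j : ℕ}
    (hM : ∀ c : Fin t → ι, StrictMono c → Equidistributed fun r s => M r (c s))
    (hjt : j ≤ t) (ht : t ≤ Fintype.card ι) {d : Fin j → ι} (hd : Function.Injective d) :
    Equidistributed fun r s => M r (d s) := by
  obtain ⟨m, rfl⟩ := Nat.exists_eq_add_of_le hjt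
  obtain ⟨e, he⟩ := Fin.Embedding.restrictSurjective_of_add_le_natCard
    (by simpa using ht) ⟨d, hd⟩
  set σ := Tuple.sort e
  have hc : StrictMono (e ∘ σ) :=
    (Tuple.monotone_sort e).strictMono_of_injective (e.injective.comp σ.injective)
  have hde : ∀ s, d s = e (Fin.castAdd m s) := fun s => (DFunLike.congr_fun he s).symm
  have hfactor : (fun r s => M r (d s)) = (Prod.fst ∘ (Fin.appendEquiv j m).symm ∘
      σ.arrowCongr (Equiv.refl α)) ∘ fun r s => M r ((e ∘ σ) s) := by
    funext r s
    simp [hde]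
  rw [hfactor]
  exact (equidistributed_fst.comp
    ((σ.arrowCongr _).trans (Fin.appendEquiv j m).symm).equidistributed).comp (hM _ hc)

end OrthogonalArray

lemma IsOA.equidistributed {R ν q t : ℕ} {M : Fin R → Fin ν → Fin q} (h : IsOA R ν q t M)
    {c : Fin t → Fin ν} (hc : StrictMono c) : Equidistributed fun r s => M r (c s) :=
  equidistributed_of_card_fiber fun v => by simpa [funext_iff] using h c hc v

lemma IsOA.equidistributed_add_comp_injective {R ν q t j : ℕ} [NeZero q]
    {M : Fin R → Fin ν → Fin q} (h : IsOA R ν q t M) (htν : t ≤ ν) (hjt : j ≤ t) {d : Fin j → Fin ν}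
    (hd : Function.Injective d) (a : Fin j → Fin q) :
    Equidistributed fun r => a + fun s => M r (d s) :=
  (Equiv.addLeft a).equidistributed.comp
    (equidistributed_comp_injective_of_strictMono (fun _ hc => h.equidistributed hc) hjt
      (by simpa using htν) hd)

namespace CSPInstance

variable {q k n : ℕ} (I : CSPInstance q k n)

lemma wor_le_value (x : Fin n → Fin q) : I.wor ≤ I.value x :=
  csInf_le (Set.finite_range _).bddBelow ⟨x, rfl⟩

lemma exists_value_eq_opt [NeZero q] : ∃ x, I.value x = I.opt :=
  (Set.range_nonempty _).csSup_mem (Set.finite_range _)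

lemma equidistributed_restrict_idx (i : Fin I.m) :
    Equidistributed fun (x : Fin n → Fin q) s => x (I.idx i s) :=
  equidistributed_comp_injective_of_strictMono (M := fun x => x)
    (fun _ hc => by rw [hc.eq_id]; exact (Equiv.refl _).equidistributed)
    (by simpa using Fintype.card_le_of_injective _ (I.idx_mono i).injective) (by simp)
    (I.idx_mono i).injective

lemma avg_mul_card_eq_sum_value [NeZero q] {ρ : Type*} [Fintype ρ] {y : ρ → Fin n → Fin q}
    (hy : ∀ i, Equidistributed fun r s => y r (I.idx i s)) :
    I.avg * Fintype.card ρ = ∑ r, I.value (y r) := by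
  have hconstraint : ∀ i, (∑ r, I.P i fun s => y r (I.idx i s)) * q ^ n
      = Fintype.card ρ * ∑ x : Fin n → Fin q, I.P i fun s => x (I.idx i s) := fun i => by
    simpa using (hy i).sum_comp_mul_card_eq (I.equidistributed_restrict_idx i) (I.P i)
  rw [avg, div_mul_eq_mul_div, div_eq_iff (pow_ne_zero _ (Nat.cast_ne_zero.2 (NeZero.ne q)))]
  simp only [value]
  rw [Finset.sum_comm, Finset.sum_mul, Finset.sum_comm, Finset.sum_mul]
  refine Finset.sum_congr rfl fun i _ => ?_
  rw [← Finset.mul_sum, ← Finset.mul_sum, mul_assoc, mul_assoc, hconstraint]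
  ring

lemma card_mul_opt_add_le_sum_value {ρ : Type*} [Fintype ρ] (y : ρ → Fin n → Fin q)
    (A : Finset ρ) (hA : ∀ r ∈ A, I.value (y r) = I.opt) :
    #A * I.opt + (Fintype.card ρ - #A) * I.wor ≤ ∑ r, I.value (y r) := by
  classical
  have hrest := Finset.card_nsmul_le_sum Aᶜ (fun r => I.value (y r)) I.wor
    fun r _ => I.wor_le_value (y r)
  rw [Finset.card_compl, nsmul_eq_mul, Nat.cast_sub A.card_le_univ] at hrest
  rw [← Finset.sum_add_sum_compl A, Finset.sum_congr rfl hA, Finset.sum_const, nsmul_eq_mul]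
  linarith

end CSPInstance

theorem avg_diff_ratio_of_OA_general
    (q k n ν R Rstar : ℕ) (hq : 2 ≤ q) (hνk : k ≤ ν)
    (I : CSPInstance q k n)
    (hcol : I.StrongColoring ν)
    (M : Fin R → Fin ν → Fin q) (hOA : IsOA R ν q k M)
    (u : Fin ν → Fin q)
    (hu : (Finset.univ.filter fun r => M r = u).card = Rstar)
    (hRs : 0 < Rstar) :
    (Rstar : ℝ) / R * I.opt + (1 - (Rstar : ℝ) / R) * I.wor ≤ I.avg := by
  have : NeZero q := ⟨by omega⟩
  obtain ⟨col, hcol⟩ := hcol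
  obtain ⟨x, hx⟩ := I.exists_value_eq_opt
  set y : Fin R → Fin n → Fin q := fun r => (x - u ∘ col) + M r ∘ col
  have hy : ∀ i, Equidistributed fun r s => y r (I.idx i s) := fun i =>
    hOA.equidistributed_add_comp_injective hνk (I.arity_le i) (hcol i) _
  have hyu : ∀ r ∈ ({r | M r = u} : Finset (Fin R)), I.value (y r) = I.opt := by
    intro r hr
    have hr : M r = u := (Finset.mem_filter.1 hr).2
    simp only [y, hr, sub_add_cancel, hx]
  have hRstar : Rstar ≤ R := hu ▸ (Finset.card_le_univ _).trans_eq (Fintype.card_fin R)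
  have hR : (0 : ℝ) < R := mod_cast hRs.trans_le hRstar
  have hbound := I.card_mul_opt_add_le_sum_value y _ hyu
  rw [← I.avg_mul_card_eq_sum_value hy, hu, Fintype.card_fin] at hbound
  rw [← mul_le_mul_iff_of_pos_right hR]
  refine le_of_eq_of_le ?_ hbound
  field_simp

/-- Let `q ≥ 2`, `k ≥ 2`, and let `I` be a maximization instance of
`k CSP-q` with `n` variables, `opt(I) ≠ wor(I)`, admitting a strong coloring with `ν ≥ k`
colors. If there is an orthogonal array `OA(R, ν, q, k)` in which some word `u ∈ Σ_q^ν`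
occurs as a row exactly `R* > 0` times, then
`E[v(I,X)] ≥ (R*/R)·opt(I) + (1 − R*/R)·wor(I)`. -/
theorem avg_diff_ratio_of_OA
    (q k n ν R Rstar : ℕ) (hq : 2 ≤ q) (hk : 2 ≤ k) (hνk : k ≤ ν)
    (I : CSPInstance q k n) (hne : I.opt ≠ I.wor)
    (hcol : I.StrongColoring ν)
    (M : Fin R → Fin ν → Fin q) (hOA : IsOA R ν q k M)
    (u : Fin ν → Fin q)
    (hu : (Finset.univ.filter fun r => M r = u).card = Rstar)
    (hRs : 0 < Rstar) :
    (Rstar : ℝ) / R * I.opt + (1 - (Rstar : ℝ) / R) * I.wor ≤ I.avg :=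
  avg_diff_ratio_of_OA_general q k n ν R Rstar hq hνk I hcol M hOA u hu hRs
end

section
/- Let q ≥ 2, k ≥ 2 and d > q be integers and let I be a maximization instance of k CSP-q with n variables and opt(I) ≠ wor(I). For a tuple π = (π_1,...,π_n) of surjective maps Σ_d → Σ_q, let f_π(I) denote the maximization instance of k CSP-d with n variables, the same weights w_i and index tuples J_i as I, and constraint functions (z_{i_1},...,z_{i_{k_i}}) ↦ P_i(π_{i_1}(z_{i_1}),...,π_{i_{k_i}}(z_{i_{k_i}})). Then there exists a tuple π of surjections Σ_d → Σ_q such that opt(f_π(I)) = opt(I), wor(f_π(I)) = wor(I), and E[v(f_π(I),Z)] ≤ E[v(I,X)] (Z uniform on Σ_d^n, X uniform on Σ_q^n); consequently the average differential ratio of I is at least the average differential ratio of f_π(I). -/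
/-- The instance `f_π(I)` of `k CSP-d` obtained from an instance `I` of `k CSP-q` and a
tuple `π` of maps `Σ_d → Σ_q`: same weights and index tuples, with constraint functions
`(z_{i_1}, ..., z_{i_{k_i}}) ↦ P_i (π_{i_1}(z_{i_1}), ..., π_{i_{k_i}}(z_{i_{k_i}}))`. -/
def CSPInstance.pullback {q k n : ℕ} (d : ℕ) (I : CSPInstance q k n)
    (π : Fin n → Fin d → Fin q) : CSPInstance d k n where
  m := I.m
  w := I.w
  w_pos := I.w_pos
  arity := I.arity
  arity_le := I.arity_le
  idx := I.idx
  idx_mono := I.idx_mono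
  P := fun i z => I.P i fun s => π (I.idx i s) (z s)


/-!
For `a ∈ Σ_q^n` let `π^a_j : Σ_d → Σ_q` fix `Σ_q ⊆ Σ_d` and send every other letter to `a_j`.
Each `π^a_j` is surjective, so `f_{π^a}(I)` takes exactly the values of `I` and has the same
`opt` and `wor`. For uniform `a`, the letter `π^a_j(z_j)` is uniform on `Σ_q`: the map
`(a, z) ↦ π^a(z)` has all fibres of size `d^n`, being the first component of a coordinatewise
involution of `Σ_q^n × Σ_d^n`. Hence the mean over `a` of `E[v(f_{π^a}(I), Z)]` is
`E[v(I, X)]`, and some `a` does no worse.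
-/

section RetractOr

variable {α β : Type*} (e : α ↪ β)

noncomputable def retractOr (a : α) (z : β) : α := (Function.partialInv e z).getD a

@[simp]
lemma retractOr_apply_self (a x : α) : retractOr e a (e x) = x := by
  simp [retractOr, Function.partialInv_left e.injective]

lemma retractOr_surjective (a : α) : Function.Surjective (retractOr e a) :=
  fun x => ⟨e x, retractOr_apply_self e a x⟩

/-- Swaps `(a, e x)` with `(x, e a)` and fixes `(a, z)` for `z ∉ range e`. -/
noncomputable def retractSwap (p : α × β) : α × β :=
  (Function.partialInv e p.2).elim p fun x => (x, e p.1)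

lemma fst_retractSwap (p : α × β) : (retractSwap e p).1 = retractOr e p.1 p.2 := by
  unfold retractSwap retractOr
  cases Function.partialInv e p.2 <;> rfl

lemma retractSwap_involutive : Function.Involutive (retractSwap e) := by
  rintro ⟨a, z⟩
  unfold retractSwap
  cases h : Function.partialInv e z with
  | none => simp [h]
  | some x =>
    obtain rfl : e x = z := (e.injective.isPartialInv x z).1 h
    simp [Function.partialInv_left e.injective]

lemma sum_sum_retractOr {ι M : Type*} [Fintype ι] [DecidableEq ι] [Fintype α] [Fintype β]
    [AddCommMonoid M] (F : (ι → α) → M) :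
    ∑ a : ι → α, ∑ z : ι → β, F (fun j => retractOr e (a j) (z j))
      = Fintype.card β ^ Fintype.card ι • ∑ x, F x := by
  let Φ : (ι → α) × (ι → β) ≃ (ι → α) × (ι → β) :=
    (Equiv.arrowProdEquivProdArrow _ _ _).symm.trans
      ((Equiv.piCongrRight fun _ => (retractSwap_involutive e).toPerm).trans
        (Equiv.arrowProdEquivProdArrow _ _ _))
  have hΦ (p : (ι → α) × (ι → β)) : (Φ p).1 = fun j => retractOr e (p.1 j) (p.2 j) := by
    funext j; exact fst_retractSwap e (p.1 j, p.2 j)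
  calc ∑ a : ι → α, ∑ z : ι → β, F (fun j => retractOr e (a j) (z j))
      = ∑ p, F (Φ p).1 := by simp only [hΦ, Fintype.sum_prod_type]
    _ = ∑ p : (ι → α) × (ι → β), F p.1 := Φ.sum_comp fun p => F p.1
    _ = Fintype.card β ^ Fintype.card ι • ∑ x, F x := by
      simp [Fintype.sum_prod_type, Finset.smul_sum]

end RetractOr

namespace CSPInstance

variable {q k n d : ℕ} (I : CSPInstance q k n)

lemma value_pullback (π : Fin n → Fin d → Fin q) (z : Fin n → Fin d) :
    (I.pullback d π).value z = I.value fun j => π j (z j) :=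
  rfl

lemma range_value_pullback {π : Fin n → Fin d → Fin q} (hπ : ∀ j, Function.Surjective (π j)) :
    Set.range (I.pullback d π).value = Set.range I.value :=
  (Function.Surjective.piMap hπ).range_comp I.value

lemma opt_pullback {π : Fin n → Fin d → Fin q} (hπ : ∀ j, Function.Surjective (π j)) :
    (I.pullback d π).opt = I.opt := by
  rw [opt, opt, I.range_value_pullback hπ]

lemma wor_pullback {π : Fin n → Fin d → Fin q} (hπ : ∀ j, Function.Surjective (π j)) :
    (I.pullback d π).wor = I.wor := by
  rw [wor, wor, I.range_value_pullback hπ]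

lemma wor_le_opt [NeZero q] : I.wor ≤ I.opt :=
  csInf_le_csSup (Set.range_nonempty _) (Set.finite_range _).bddBelow
    (Set.finite_range _).bddAbove

lemma sum_avg_pullback_retractOr [NeZero q] [NeZero d] (e : Fin q ↪ Fin d) :
    ∑ a : Fin n → Fin q, (I.pullback d fun j => retractOr e (a j)).avg = q ^ n * I.avg := by
  have hq : (q : ℝ) ^ n ≠ 0 := pow_ne_zero _ (Nat.cast_ne_zero.2 (NeZero.ne q))
  have hd : (d : ℝ) ^ n ≠ 0 := pow_ne_zero _ (Nat.cast_ne_zero.2 (NeZero.ne d))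
  simp only [avg, ← Finset.sum_div, value_pullback, sum_sum_retractOr e I.value]
  simp only [Fintype.card_fin, nsmul_eq_mul, Nat.cast_pow]
  field_simp

lemma exists_avg_pullback_retractOr_le [NeZero q] [NeZero d] (e : Fin q ↪ Fin d) :
    ∃ a : Fin n → Fin q, (I.pullback d fun j => retractOr e (a j)).avg ≤ I.avg := by
  obtain ⟨a, -, ha⟩ := Finset.exists_le_of_sum_le (g := fun _ => I.avg)
    (f := fun a : Fin n → Fin q => (I.pullback d fun j => retractOr e (a j)).avg)
    Finset.univ_nonempty (by simp [I.sum_avg_pullback_retractOr e])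
  exact ⟨a, ha⟩

end CSPInstance

theorem avg_diff_ratio_alphabet_extension_general
    (q k d n : ℕ) (hq : 2 ≤ q) (hd : q < d)
    (I : CSPInstance q k n) :
    ∃ π : Fin n → Fin d → Fin q, (∀ j, Function.Surjective (π j)) ∧
      (I.pullback d π).opt = I.opt ∧ (I.pullback d π).wor = I.wor ∧
      (I.pullback d π).avg ≤ I.avg ∧
      ((I.pullback d π).avg - (I.pullback d π).wor) /
          ((I.pullback d π).opt - (I.pullback d π).wor) ≤
        (I.avg - I.wor) / (I.opt - I.wor) := by
  have : NeZero q := ⟨by omega⟩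
  have : NeZero d := ⟨by omega⟩
  let e := Fin.castLEEmb hd.le
  obtain ⟨a, ha⟩ := I.exists_avg_pullback_retractOr_le e
  have hπ (j : Fin n) : Function.Surjective (retractOr e (a j)) := retractOr_surjective e (a j)
  refine ⟨fun j => retractOr e (a j), hπ, I.opt_pullback hπ, I.wor_pullback hπ, ha, ?_⟩
  rw [I.opt_pullback hπ, I.wor_pullback hπ]
  exact div_le_div_of_nonneg_right (by linarith) (sub_nonneg.2 I.wor_le_opt)

/-- Let `q ≥ 2`, `k ≥ 2`, `d > q`, and let `I` be a maximization instance
of `k CSP-q` with `n` variables and `opt(I) ≠ wor(I)`. Then there is a tuple `π` of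
surjections `Σ_d → Σ_q` such that `opt(f_π(I)) = opt(I)`, `wor(f_π(I)) = wor(I)` and
`E[v(f_π(I),Z)] ≤ E[v(I,X)]`; consequently the average differential ratio of `I` is at
least the average differential ratio of `f_π(I)`. -/
theorem avg_diff_ratio_alphabet_extension
    (q k d n : ℕ) (hq : 2 ≤ q) (hk : 2 ≤ k) (hd : q < d)
    (I : CSPInstance q k n) (hne : I.opt ≠ I.wor) :
    ∃ π : Fin n → Fin d → Fin q, (∀ j, Function.Surjective (π j)) ∧
      (I.pullback d π).opt = I.opt ∧ (I.pullback d π).wor = I.wor ∧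
      (I.pullback d π).avg ≤ I.avg ∧
      ((I.pullback d π).avg - (I.pullback d π).wor) /
          ((I.pullback d π).opt - (I.pullback d π).wor) ≤
        (I.avg - I.wor) / (I.opt - I.wor) :=
  avg_diff_ratio_alphabet_extension_general q k d n hq hd I
end

section
/- For all integers q ≥ 2, t ≥ 1 and ν > t, the following chain of inequalities holds: E(ν,q,t) ≤ F(ν−1,q,t) ≤ F(ν,q,t+1)/q ≤ E(ν,q,t+1). Moreover, when q = 2 and t is even, all of these are equalities: E(ν,2,t) = F(ν−1,2,t) = F(ν,2,t+1)/2 = E(ν,2,t+1). -/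
/-- `M` is a difference scheme `D_t(R, ν, q)` based on `(ℤ_q, +)`: for every `t` pairwise
distinct columns `c 0 < ... < c (t-1)` and every word `v ∈ Σ_q^t`, exactly `R / q^(t-1)` rows
of `M` restrict on these columns to a word of the form `v + a·𝟏`, `a ∈ Σ_q`. -/
def IsDS (R ν q t : ℕ) (M : Fin R → Fin ν → Fin q) : Prop :=
  ∀ c : Fin t → Fin ν, StrictMono c → ∀ v : Fin t → Fin q,
    (Finset.univ.filter fun r => ∃ a : Fin q, ∀ s, M r (c s) = v s + a).card * q ^ (t - 1) = R

/-- `F(ν, q, t)`: the minimum number of rows of an orthogonal array of strength `t` with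
`ν` columns and entries in `Σ_q`. -/
noncomputable def Fnum (ν q t : ℕ) : ℕ :=
  sInf {R | 0 < R ∧ ∃ M : Fin R → Fin ν → Fin q, IsOA R ν q t M}

/-- `E(ν, q, t)`: the minimum number of rows of a difference scheme of strength `t` with
`ν` columns based on `(ℤ_q, +)`. -/
noncomputable def Enum (ν q t : ℕ) : ℕ :=
  sInf {R | 0 < R ∧ ∃ M : Fin R → Fin ν → Fin q, IsDS R ν q t M}

open Finset

section Counts

variable {R ν q k : ℕ}

def matchCount (M : Fin R → Fin ν → Fin q) (c : Fin k → Fin ν) (v : Fin k → Fin q) :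
    ℕ :=
  #{r | ∀ s, M r (c s) = v s}

def cosetCount (M : Fin R → Fin ν → Fin q) (c : Fin k → Fin ν) (v : Fin k → Fin q) :
    ℕ :=
  #{r | ∃ a : Fin q, ∀ s, M r (c s) = v s + a}

theorem isOA_iff {t : ℕ} {M : Fin R → Fin ν → Fin q} :
    IsOA R ν q t M ↔
      ∀ c : Fin t → Fin ν, StrictMono c → ∀ v, matchCount M c v * q ^ t = R :=
  Iff.rfl

theorem isDS_iff {t : ℕ} {M : Fin R → Fin ν → Fin q} :
    IsDS R ν q t M ↔
      ∀ c : Fin t → Fin ν, StrictMono c → ∀ v, cosetCount M c v * q ^ (t - 1) = R :=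
  Iff.rfl

theorem matchCount_eq_sum_insertNth (M : Fin R → Fin ν → Fin q) (i : Fin (k + 1)) (e : Fin ν)
    (c : Fin k → Fin ν) (v : Fin k → Fin q) :
    matchCount M c v = ∑ b, matchCount M (Fin.insertNth i e c) (Fin.insertNth i b v) := by
  rw [matchCount, card_eq_sum_card_fiberwise (f := fun r => M r e) (t := univ)
    fun _ _ => mem_univ _]
  refine sum_congr rfl fun b _ => ?_
  rw [filter_filter, matchCount]
  congr 1
  ext r
  simp [Fin.forall_iff_succAbove i, and_comm]

theorem matchCount_comp_perm (M : Fin R → Fin ν → Fin q) (c : Fin k → Fin ν)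
    (v : Fin k → Fin q) (σ : Equiv.Perm (Fin k)) :
    matchCount M (c ∘ σ) (v ∘ σ) = matchCount M c v := by
  simp only [matchCount]
  congr 1
  ext r
  simp only [mem_filter, mem_univ, true_and, Function.comp_apply]
  exact σ.forall_congr_right (q := fun s => M r (c s) = v s)

theorem cosetCount_eq_sum_matchCount [NeZero q] (M : Fin R → Fin ν → Fin q)
    (c : Fin (k + 1) → Fin ν) (v : Fin (k + 1) → Fin q) :
    cosetCount M c v = ∑ a, matchCount M c (fun s => v s + a) := by
  rw [cosetCount, card_eq_sum_card_fiberwise (f := fun r => M r (c 0) - v 0) (t := univ)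
    fun _ _ => mem_univ _]
  refine sum_congr rfl fun a _ => ?_
  rw [filter_filter, matchCount]
  congr 1
  ext r
  simp only [mem_filter, mem_univ, true_and]
  constructor
  · rintro ⟨⟨b, hb⟩, rfl⟩ s
    simp [hb, add_sub_cancel_left]
  · intro h
    exact ⟨⟨a, h⟩, by simp [h 0, add_sub_cancel_left]⟩

theorem cosetCount_add_const [NeZero q] (M : Fin R → Fin ν → Fin q) (c : Fin k → Fin ν)
    (v : Fin k → Fin q) (a : Fin q) :
    cosetCount M c (fun s => v s + a) = cosetCount M c v := by
  simp only [cosetCount]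
  congr 1
  ext r
  simp only [mem_filter, mem_univ, true_and]
  constructor
  · rintro ⟨b, hb⟩
    exact ⟨a + b, fun s => by rw [hb, add_assoc]⟩
  · rintro ⟨b, hb⟩
    exact ⟨b - a, fun s => by rw [hb]; abel⟩

end Counts

section Strength

variable {R ν q t k : ℕ} {M : Fin R → Fin ν → Fin q}

theorem IsOA.matchCount_of_injective (h : IsOA R ν q t M) {c : Fin t → Fin ν}
    (hc : Function.Injective c) (v : Fin t → Fin q) : matchCount M c v * q ^ t = R := by
  have hsorted : StrictMono (c ∘ Tuple.sort c) :=
    (Tuple.monotone_sort c).strictMono_of_injective (hc.comp (Tuple.sort c).injective)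
  rw [← matchCount_comp_perm M c v (Tuple.sort c)]
  exact h _ hsorted _

theorem exists_notMem_range_of_lt {c : Fin k → Fin ν} (hk : k < ν) :
    ∃ e, e ∉ Set.range c := by
  by_contra! hc
  have := Fintype.card_le_of_surjective c fun e => hc e
  simp only [Fintype.card_fin] at this
  omega

theorem IsOA.of_succ (hq : 0 < q) (ht : t < ν) (h : IsOA R ν q (t + 1) M) :
    IsOA R ν q t M := by
  refine isOA_iff.2 fun c hc v => ?_
  obtain ⟨e, he⟩ := exists_notMem_range_of_lt (c := c) ht
  have hinj : Function.Injective (Fin.insertNth 0 e c : Fin (t + 1) → Fin ν) := by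
    rw [Fin.insertNth_zero']
    exact Fin.cons_injective_iff.2 ⟨he, hc.injective⟩
  apply Nat.eq_of_mul_eq_mul_right hq
  calc matchCount M c v * q ^ t * q
      = ∑ b, matchCount M (Fin.insertNth 0 e c) (Fin.insertNth 0 b v) * q ^ (t + 1) := by
        rw [matchCount_eq_sum_insertNth M 0 e c v, sum_mul, sum_mul, pow_succ]
        simp only [mul_assoc]
    _ = R * q := by
        rw [sum_congr rfl fun b _ => h.matchCount_of_injective hinj (Fin.insertNth 0 b v)]
        simp [mul_comm]

theorem IsOA.of_le (hq : 0 < q) (hkt : k ≤ t) (htν : t ≤ ν) (h : IsOA R ν q t M) :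
    IsOA R ν q k M := by
  induction t, hkt using Nat.le_induction with
  | base => exact h
  | succ t _ ih => exact ih (by omega) (h.of_succ hq (by omega))

theorem IsOA.isDS [NeZero q] (ht : 0 < t) (h : IsOA R ν q t M) : IsDS R ν q t M := by
  obtain ⟨t, rfl⟩ : ∃ t', t = t' + 1 := ⟨t - 1, by omega⟩
  refine isDS_iff.2 fun c hc v => ?_
  have hcoset : cosetCount M c v * q ^ t * q = R * q := by
    rw [mul_assoc, ← pow_succ, cosetCount_eq_sum_matchCount, sum_mul,
      sum_congr rfl fun a _ => isOA_iff.1 h c hc (fun s => v s + a)]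
    simp [mul_comm]
  simpa using Nat.eq_of_mul_eq_mul_right (Nat.pos_of_neZero q) hcoset

def fullFactorial (q ν : ℕ) : Fin (q ^ ν) → Fin ν → Fin q :=
  finFunctionFinEquiv.symm

theorem isOA_fullFactorial (q : ℕ) (hq : 0 < q) (ht : t ≤ ν) :
    IsOA (q ^ ν) ν q t (fullFactorial q ν) := by
  refine IsOA.of_le hq ht le_rfl <| isOA_iff.2 fun c hc v => ?_
  obtain rfl : c = id := hc.eq_id
  have : matchCount (fullFactorial q ν) id v = 1 := by
    simp [matchCount, fullFactorial, ← funext_iff, Equiv.symm_apply_eq, filter_eq']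
  rw [this, one_mul]

end Strength

theorem strictMono_eq_succ_comp_or_eq_cons_zero {k ν : ℕ} {c : Fin (k + 1) → Fin (ν + 1)}
    (hc : StrictMono c) :
    (∃ c' : Fin (k + 1) → Fin ν, StrictMono c' ∧ c = Fin.succ ∘ c') ∨
      ∃ c' : Fin k → Fin ν, StrictMono c' ∧ c = Fin.cons 0 (Fin.succ ∘ c') := by
  by_cases h0 : c 0 = 0
  · right
    have hne : ∀ s : Fin k, c s.succ ≠ 0 := fun s => ne_of_gt (h0 ▸ hc (Fin.succ_pos s))
    refine ⟨fun s => (c s.succ).pred (hne s), fun a b hab => ?_, ?_⟩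
    · simpa [Fin.pred_lt_pred_iff] using hc (Fin.succ_lt_succ_iff.2 hab)
    · funext s
      cases s using Fin.cases <;> simp [h0]
  · left
    have hne : ∀ s, c s ≠ 0 := fun s hs =>
      h0 (le_antisymm (hs ▸ hc.monotone (Fin.zero_le s)) (Fin.zero_le _))
    refine ⟨fun s => (c s).pred (hne s), fun a b hab => ?_, ?_⟩
    · simpa [Fin.pred_lt_pred_iff] using hc hab
    · funext s
      simp

theorem strictMono_cons_zero_succ_comp {k ν : ℕ} {c : Fin k → Fin ν} (hc : StrictMono c) :
    StrictMono (Fin.cons 0 (Fin.succ ∘ c) : Fin (k + 1) → Fin (ν + 1)) :=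
  Fin.strictMono_cons.2 ⟨fun _ => Fin.succ_pos _, Fin.strictMono_succ.comp hc⟩

section Constructions

variable {R ν q k : ℕ} [NeZero q]

def prependZero (M : Fin R → Fin ν → Fin q) : Fin R → Fin (ν + 1) → Fin q :=
  fun r => Fin.cons 0 (M r)

def normalizeFirst (M : Fin R → Fin (ν + 1) → Fin q) : Fin R → Fin ν → Fin q :=
  fun r j => M r j.succ - M r 0

/-- Row `(a, r)` of the developed array is row `r` of `M` shifted by `a`. -/
def develop (M : Fin R → Fin ν → Fin q) : Fin (q * R) → Fin ν → Fin q :=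
  fun x j => M (finProdFinEquiv.symm x).2 j + (finProdFinEquiv.symm x).1

theorem cosetCount_prependZero_succ (M : Fin R → Fin ν → Fin q) (c : Fin k → Fin ν)
    (v : Fin k → Fin q) : cosetCount (prependZero M) (Fin.succ ∘ c) v = cosetCount M c v :=
  rfl

theorem cosetCount_prependZero_cons (M : Fin R → Fin ν → Fin q) (c : Fin k → Fin ν)
    (v : Fin (k + 1) → Fin q) :
    cosetCount (prependZero M) (Fin.cons 0 (Fin.succ ∘ c)) v =
      matchCount M c (fun s => v s.succ - v 0) := by
  simp only [cosetCount, matchCount]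
  congr 1
  ext r
  simp only [mem_filter, mem_univ, true_and, Fin.forall_fin_succ, Fin.cons_zero, Fin.cons_succ,
    prependZero, Function.comp_apply]
  constructor
  · rintro ⟨a, ha0, ha⟩ s
    rw [ha s, eq_neg_of_add_eq_zero_right ha0.symm, sub_eq_add_neg]
  · intro h
    exact ⟨-v 0, by simp, fun s => by rw [h s, sub_eq_add_neg]⟩

theorem matchCount_normalizeFirst (M : Fin R → Fin (ν + 1) → Fin q) (c : Fin k → Fin ν)
    (v : Fin k → Fin q) :
    matchCount (normalizeFirst M) c v =
      cosetCount M (Fin.cons 0 (Fin.succ ∘ c)) (Fin.cons 0 v) := by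
  simp only [cosetCount, matchCount]
  congr 1
  ext r
  simp only [mem_filter, mem_univ, true_and, Fin.forall_fin_succ, Fin.cons_zero, Fin.cons_succ,
    normalizeFirst, Function.comp_apply, zero_add, exists_eq_left', sub_eq_iff_eq_add]

theorem matchCount_develop (M : Fin R → Fin ν → Fin q) (c : Fin (k + 1) → Fin ν)
    (v : Fin (k + 1) → Fin q) : matchCount (develop M) c v = cosetCount M c v := by
  rw [cosetCount_eq_sum_matchCount, ← Equiv.sum_comp (Equiv.neg (Fin q)), matchCount, card_filter,
    ← finProdFinEquiv.sum_comp, Fintype.sum_prod_type]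
  refine sum_congr rfl fun a _ => ?_
  rw [matchCount, card_filter]
  refine sum_congr rfl fun r _ => ?_
  simp [develop, ← sub_eq_add_neg, eq_sub_iff_add_eq]

theorem cosetCount_develop (M : Fin R → Fin ν → Fin q) (c : Fin (k + 1) → Fin ν)
    (v : Fin (k + 1) → Fin q) : cosetCount (develop M) c v = q * cosetCount M c v := by
  simp [cosetCount_eq_sum_matchCount (develop M), matchCount_develop, cosetCount_add_const]

end Constructions

section Transformations

variable {R ν q t : ℕ} [NeZero q]

theorem IsOA.isDS_prependZero {M : Fin R → Fin ν → Fin q} (ht₀ : 0 < t) (ht : t ≤ ν)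
    (h : IsOA R ν q t M) : IsDS R (ν + 1) q t (prependZero M) := by
  obtain ⟨t, rfl⟩ : ∃ t', t = t' + 1 := ⟨t - 1, by omega⟩
  refine isDS_iff.2 fun c hc v => ?_
  rcases strictMono_eq_succ_comp_or_eq_cons_zero hc with ⟨c', hc', rfl⟩ | ⟨c', hc', rfl⟩
  · rw [cosetCount_prependZero_succ]
    exact isDS_iff.1 (h.isDS ht₀) c' hc' v
  · rw [cosetCount_prependZero_cons]
    simpa using isOA_iff.1 (h.of_le (Nat.pos_of_neZero q) t.le_succ ht) c' hc' _

theorem card_filter_equivFin_symm {α : Type*} (S : Finset α) (P : α → Prop) [DecidablePred P] :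
    #{i | P (S.equivFin.symm i)} = #{x ∈ S | P x} := by
  rw [card_filter, card_filter, ← sum_coe_sort S]
  exact S.equivFin.symm.sum_comp (fun x : S => if P x then 1 else 0)

/-- `N` consists of the rows of `M` with `0` in the first column, with that column deleted. -/
theorem IsOA.exists_isOA_derived {M : Fin R → Fin (ν + 1) → Fin q} (ht : t ≤ ν)
    (h : IsOA R (ν + 1) q (t + 1) M) :
    ∃ K, K * q = R ∧ ∃ N : Fin K → Fin ν → Fin q, IsOA K ν q t N := by
  set S : Finset (Fin R) := {r | M r 0 = 0}
  have hS : #S * q = R := by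
    have h₁ := isOA_iff.1 (h.of_le (Nat.pos_of_neZero q) (by omega) (by omega))
      (fun _ : Fin 1 => 0) (Subsingleton.strictMono _) (fun _ => 0)
    rwa [pow_one, matchCount, filter_congr fun r _ => Fin.forall_fin_one] at h₁
  refine ⟨#S, hS, fun i j => M (S.equivFin.symm i) j.succ, isOA_iff.2 fun c hc v => ?_⟩
  have hcount : matchCount (fun i j => M (S.equivFin.symm i) j.succ) c v =
      matchCount M (Fin.cons 0 (Fin.succ ∘ c)) (Fin.cons 0 v) := by
    rw [matchCount, card_filter_equivFin_symm S fun r => ∀ s, M r (c s).succ = v s, matchCount,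
      filter_filter]
    simp only [Fin.forall_fin_succ, Fin.cons_zero, Fin.cons_succ, Function.comp_apply]
  apply Nat.eq_of_mul_eq_mul_right (Nat.pos_of_neZero q)
  rw [hS, hcount, mul_assoc, ← pow_succ]
  exact isOA_iff.1 h _ (strictMono_cons_zero_succ_comp hc) _

theorem IsDS.isOA_normalizeFirst {M : Fin R → Fin (ν + 1) → Fin q}
    (h : IsDS R (ν + 1) q (t + 1) M) :
    IsOA R ν q t (normalizeFirst M) := by
  refine isOA_iff.2 fun c hc v => ?_
  simpa [matchCount_normalizeFirst] using
    isDS_iff.1 h _ (strictMono_cons_zero_succ_comp hc) (Fin.cons 0 v)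

theorem IsDS.isOA_develop {M : Fin R → Fin ν → Fin q} (ht : 0 < t) (h : IsDS R ν q t M) :
    IsOA (q * R) ν q t (develop M) := by
  obtain ⟨t, rfl⟩ : ∃ t', t = t' + 1 := ⟨t - 1, by omega⟩
  refine isOA_iff.2 fun c hc v => ?_
  rw [matchCount_develop, pow_succ, ← mul_assoc, mul_comm]
  simpa using congrArg (q * ·) (isDS_iff.1 h c hc v)

end Transformations

section Binary

/-- Flipping one coordinate turns `g w` into `n - g w`, so flipping all coordinates of an
odd-length word does too. -/
theorem add_apply_add_one_of_odd_card {ι : Type*} [Fintype ι] [DecidableEq ι]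
    {g : (ι → Fin 2) → ℕ} {n : ℕ} (hflip : ∀ w i, g w + g (w + Pi.single i 1) = n)
    (hodd : Odd (Fintype.card ι)) (w : ι → Fin 2) : g w + g (w + 1) = n := by
  have key : ∀ (S : Finset ι) w, (Even #S → g (w + ∑ i ∈ S, Pi.single i 1) = g w) ∧
      (Odd #S → g w + g (w + ∑ i ∈ S, Pi.single i 1) = n) := by
    intro S
    induction S using Finset.induction_on with
    | empty => simp
    | insert a S ha ih =>
      intro w
      obtain ⟨ihEven, ihOdd⟩ := ih (w + Pi.single a 1)
      rw [sum_insert ha, ← add_assoc, card_insert_of_notMem ha, Nat.even_add_one, Nat.odd_add_one,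
        Nat.not_even_iff_odd, Nat.not_odd_iff_even]
      refine ⟨fun hS => ?_, fun hS => ?_⟩
      · have := ihOdd hS
        have := hflip w a
        omega
      · rw [ihEven hS, hflip]
  have hall : ∑ i, Pi.single i (1 : Fin 2) = (1 : ι → Fin 2) := univ_sum_single 1
  simpa [hall] using (key univ w).2 hodd

theorem matchCount_add_matchCount_flip {R ν k : ℕ} (M : Fin R → Fin ν → Fin 2)
    (d : Fin (k + 1) → Fin ν) (w : Fin (k + 1) → Fin 2) (i : Fin (k + 1)) :
    matchCount M d w + matchCount M d (w + Pi.single i 1) =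
      matchCount M (i.removeNth d) (i.removeNth w) := by
  have hflip : Fin.insertNth i (1 + w i) (i.removeNth w) = w + Pi.single i 1 := by
    ext j
    cases j using Fin.succAboveCases i <;> simp [Fin.removeNth, add_comm]
  rw [matchCount_eq_sum_insertNth M i (d i), Fin.insertNth_self_removeNth,
    ← Equiv.sum_comp (Equiv.addRight (w i)), Fin.sum_univ_two]
  simp [hflip]

variable {R ν t : ℕ} {M : Fin R → Fin ν → Fin 2}

theorem IsOA.cosetCount_mul_pow_of_even (h : IsOA R ν 2 t M) (hte : Even t)
    {d : Fin (t + 1) → Fin ν} (hd : StrictMono d) (w : Fin (t + 1) → Fin 2) :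
    cosetCount M d w * 2 ^ t = R := by
  have hflip : ∀ w i,
      matchCount M d w * 2 ^ t + matchCount M d (w + Pi.single i 1) * 2 ^ t = R := by
    intro w i
    rw [← add_mul, matchCount_add_matchCount_flip]
    exact isOA_iff.1 h _ (hd.comp (Fin.strictMono_succAbove i)) _
  have hodd : Odd (Fintype.card (Fin (t + 1))) := by simpa [Nat.odd_add_one] using hte
  rw [cosetCount_eq_sum_matchCount, Fin.sum_univ_two, add_mul]
  simp only [add_zero]
  exact add_apply_add_one_of_odd_card (g := fun w => matchCount M d w * 2 ^ t) hflip hodd w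

theorem IsDS.succ_of_even (h : IsDS R ν 2 t M) (hte : Even t) (ht : 0 < t) :
    IsDS R ν 2 (t + 1) M := by
  refine isDS_iff.2 fun d hd w => ?_
  have h₂ := (h.isOA_develop ht).cosetCount_mul_pow_of_even hte hd w
  rw [cosetCount_develop, mul_assoc] at h₂
  simpa using Nat.eq_of_mul_eq_mul_left two_pos h₂

end Binary

section Minima

variable {R ν q t : ℕ} {M : Fin R → Fin ν → Fin q}

theorem Fnum_le (hR : 0 < R) (h : IsOA R ν q t M) : Fnum ν q t ≤ R :=
  Nat.sInf_le ⟨hR, M, h⟩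

theorem Enum_le (hR : 0 < R) (h : IsDS R ν q t M) : Enum ν q t ≤ R :=
  Nat.sInf_le ⟨hR, M, h⟩

theorem exists_isOA_Fnum (hq : 0 < q) (ht : t ≤ ν) :
    0 < Fnum ν q t ∧
      ∃ M : Fin (Fnum ν q t) → Fin ν → Fin q, IsOA (Fnum ν q t) ν q t M :=
  Nat.sInf_mem (s := {R | 0 < R ∧ ∃ M : Fin R → Fin ν → Fin q, IsOA R ν q t M})
    ⟨q ^ ν, pow_pos hq ν, _, isOA_fullFactorial q hq ht⟩

theorem exists_isDS_Enum [NeZero q] (ht₀ : 0 < t) (ht : t ≤ ν) :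
    0 < Enum ν q t ∧
      ∃ M : Fin (Enum ν q t) → Fin ν → Fin q, IsDS (Enum ν q t) ν q t M :=
  Nat.sInf_mem (s := {R | 0 < R ∧ ∃ M : Fin R → Fin ν → Fin q, IsDS R ν q t M})
    ⟨q ^ ν, Nat.pos_of_neZero _, _, (isOA_fullFactorial q (Nat.pos_of_neZero q) ht).isDS ht₀⟩

theorem Enum_succ_le_Fnum [NeZero q] (ht₀ : 0 < t) (ht : t ≤ ν) :
    Enum (ν + 1) q t ≤ Fnum ν q t := by
  obtain ⟨hF, M, hM⟩ := exists_isOA_Fnum (Nat.pos_of_neZero q) ht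
  exact Enum_le hF (hM.isDS_prependZero ht₀ ht)

theorem mul_Fnum_le_Fnum_succ [NeZero q] (ht : t ≤ ν) :
    q * Fnum ν q t ≤ Fnum (ν + 1) q (t + 1) := by
  obtain ⟨hF, M, hM⟩ := exists_isOA_Fnum (Nat.pos_of_neZero q) (Nat.succ_le_succ ht)
  obtain ⟨K, hK, N, hN⟩ := hM.exists_isOA_derived ht
  rw [← hK] at hF ⊢
  rw [mul_comm]
  exact Nat.mul_le_mul_right q (Fnum_le (Nat.pos_of_mul_pos_right hF) hN)

theorem Fnum_le_mul_Enum [NeZero q] (ht₀ : 0 < t) (ht : t ≤ ν) :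
    Fnum ν q t ≤ q * Enum ν q t := by
  obtain ⟨hE, M, hM⟩ := exists_isDS_Enum (q := q) ht₀ ht
  exact Fnum_le (Nat.mul_pos (Nat.pos_of_neZero q) hE) (hM.isOA_develop ht₀)

theorem Fnum_le_Enum_succ_of_even (ht₀ : 0 < t) (hte : Even t) (ht : t ≤ ν + 1) :
    Fnum ν 2 t ≤ Enum (ν + 1) 2 t := by
  obtain ⟨hE, M, hM⟩ := exists_isDS_Enum (q := 2) ht₀ ht
  exact Fnum_le hE (hM.succ_of_even hte ht₀).isOA_normalizeFirst

theorem Enum_succ_succ_le_Fnum_of_even (ht₀ : 0 < t) (hte : Even t) (ht : t ≤ ν) :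
    Enum (ν + 1) 2 (t + 1) ≤ Fnum ν 2 t := by
  obtain ⟨hF, M, hM⟩ := exists_isOA_Fnum two_pos ht
  exact Enum_le hF ((hM.isDS_prependZero ht₀ ht).succ_of_even hte ht₀)

end Minima

/-- For all integers `q ≥ 2`, `t ≥ 1` and `ν > t`:
`E(ν,q,t) ≤ F(ν−1,q,t) ≤ F(ν,q,t+1)/q ≤ E(ν,q,t+1)` (the middle inequalities are stated
multiplied through by `q`). Moreover, when `q = 2` and `t` is even, all of these are
equalities. -/
theorem Enum_Fnum_chain (q t ν : ℕ) (hq : 2 ≤ q) (ht : 1 ≤ t) (hν : t < ν) :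
    (Enum ν q t ≤ Fnum (ν - 1) q t ∧
      q * Fnum (ν - 1) q t ≤ Fnum ν q (t + 1) ∧
      Fnum ν q (t + 1) ≤ q * Enum ν q (t + 1)) ∧
    (q = 2 → Even t →
      Enum ν 2 t = Fnum (ν - 1) 2 t ∧
        2 * Fnum (ν - 1) 2 t = Fnum ν 2 (t + 1) ∧
        Fnum ν 2 (t + 1) = 2 * Enum ν 2 (t + 1)) := by
  have : NeZero q := ⟨by omega⟩
  obtain ⟨ν, rfl⟩ : ∃ ν', ν = ν' + 1 := ⟨ν - 1, by omega⟩
  rw [Nat.add_sub_cancel]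
  have h₁ : Enum (ν + 1) q t ≤ Fnum ν q t := Enum_succ_le_Fnum ht (by omega)
  have h₂ : q * Fnum ν q t ≤ Fnum (ν + 1) q (t + 1) := mul_Fnum_le_Fnum_succ (by omega)
  have h₃ : Fnum (ν + 1) q (t + 1) ≤ q * Enum (ν + 1) q (t + 1) :=
    Fnum_le_mul_Enum t.succ_pos (by omega)
  refine ⟨⟨h₁, h₂, h₃⟩, fun hq₂ hte => ?_⟩
  subst hq₂
  have h₄ : Fnum ν 2 t ≤ Enum (ν + 1) 2 t := Fnum_le_Enum_succ_of_even ht hte (by omega)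
  have h₅ : Enum (ν + 1) 2 (t + 1) ≤ Fnum ν 2 t :=
    Enum_succ_succ_le_Fnum_of_even ht hte (by omega)
  omega
end

section
/- For all integers q ≥ 2 and t ≥ 1 such that t is odd or q is odd, E(t+1, q, t) = q^{t−1}; that is, the minimum number of rows of a difference scheme of strength t with t+1 columns based on (ℤ_q,+) equals q^{t−1}. -/
/-!
The row count of a difference scheme is a multiple of `q^(t-1)`, which gives the lower bound.
For the upper bound, index the rows by `y ∈ ℤ_q^(t-1)` and take the `t + 1` columns
`0, y₁, …, y_{t-1}, ∑ cᵢ yᵢ`. After deleting any one column, `(y, a) ↦ row - a·𝟏` is an additive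
map `ℤ_q^t → ℤ_q^t`, injective (hence bijective) as soon as every `cᵢ` and `1 - ∑ cᵢ` are units,
so every word `v` is hit by exactly one row. The alternating choice `cᵢ = -(-1)^i` has
`∑ cᵢ ∈ {0, -1}`, so `1 - ∑ cᵢ` is `1` or, when `t` is even, `2`, a unit for odd `q`.
-/

open Finset

theorem IsDS.pow_le {R ν q t : ℕ} {M : Fin R → Fin ν → Fin q} (h : IsDS R ν q t M)
    (htν : t ≤ ν) (hq : 0 < q) (hR : 0 < R) : q ^ (t - 1) ≤ R :=
  Nat.le_of_dvd hR (Dvd.intro_left _ (h _ (Fin.strictMono_castLE htν) fun _ => ⟨0, hq⟩))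

theorem isDS_of_existsUnique {R ν q t : ℕ} {M : Fin R → Fin ν → Fin q} (hR : R = q ^ (t - 1))
    (h : ∀ c : Fin t → Fin ν, StrictMono c → ∀ v : Fin t → Fin q,
      ∃! r, ∃ a : Fin q, ∀ s, M r (c s) = v s + a) :
    IsDS R ν q t M := fun c hc v => by
  rw [(Fintype.existsUnique_iff_card_one _).mp (h c hc v), one_mul, hR]

theorem Enum_eq_pow_of_isDS {ν q t : ℕ} {M : Fin (q ^ (t - 1)) → Fin ν → Fin q} (htν : t ≤ ν)
    (hq : 0 < q) (hM : IsDS (q ^ (t - 1)) ν q t M) : Enum ν q t = q ^ (t - 1) := by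
  have hmem : q ^ (t - 1) ∈ {R | 0 < R ∧ ∃ M : Fin R → Fin ν → Fin q, IsDS R ν q t M} :=
    ⟨pow_pos hq _, M, hM⟩
  refine le_antisymm (Nat.sInf_le hmem) (le_csInf ⟨_, hmem⟩ ?_)
  rintro R ⟨hR, M', hM'⟩
  exact hM'.pow_le htν hq hR

section LinearRow

variable {A : Type*} [CommRing A] {m : ℕ} (c : Fin m → A)

def linearRow (y : Fin m → A) : Fin (m + 2) → A :=
  Fin.cons 0 (Fin.snoc y (∑ i, c i * y i))

variable {c}

@[simp] lemma linearRow_zero (y : Fin m → A) : linearRow c y 0 = 0 := rfl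

@[simp] lemma linearRow_castSucc_succ (y : Fin m → A) (i : Fin m) :
    linearRow c y i.castSucc.succ = y i := by
  simp [linearRow]

@[simp] lemma linearRow_last (y : Fin m → A) :
    linearRow c y (Fin.last (m + 1)) = ∑ i, c i * y i := by
  rw [← Fin.succ_last, linearRow, Fin.cons_succ, Fin.snoc_last]

lemma linearRow_sub (y z : Fin m → A) : linearRow c (y - z) = linearRow c y - linearRow c z := by
  funext j
  induction j using Fin.cases with
  | zero => simp
  | succ j =>
    induction j using Fin.lastCases with
    | last => simp [mul_sub, sum_sub_distrib]
    | cast i => simp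

theorem eq_zero_of_forall_ne_linearRow_eq (hc : ∀ i, IsUnit (c i)) (hc1 : IsUnit (1 - ∑ i, c i))
    {k : Fin (m + 2)} {y : Fin m → A} {a : A} (h : ∀ j ≠ k, linearRow c y j = a) :
    y = 0 ∧ a = 0 := by
  induction k using Fin.cases with
  | zero =>
    have hy (i : Fin m) : y i = a := by simpa using h i.castSucc.succ (Fin.succ_ne_zero _)
    have hsum : ∑ i, c i * y i = a := by simpa using h (Fin.last _) (Fin.last_pos.ne')
    have ha : a = 0 := by
      refine hc1.mul_right_eq_zero.mp ?_
      simp only [hy, ← sum_mul] at hsum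
      linear_combination -hsum
    exact ⟨funext fun i => (hy i).trans ha, ha⟩
  | succ k =>
    have ha : a = 0 := by simpa [eq_comm] using h 0 (Fin.succ_ne_zero k).symm
    subst ha
    refine ⟨?_, rfl⟩
    induction k using Fin.lastCases with
    | last => exact funext fun i => by simpa using h i.castSucc.succ (by simp [Fin.succ_last])
    | cast i₀ =>
      have hy (i : Fin m) (hi : i ≠ i₀) : y i = 0 := by simpa using h i.castSucc.succ (by simpa)
      have hsum : c i₀ * y i₀ = 0 := by
        rw [← sum_eq_single (f := fun i => c i * y i) i₀
          (fun i _ hi => by rw [hy i hi, mul_zero]) (fun h => absurd (mem_univ _) h)]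
        simpa [Fin.succ_last] using
          h (Fin.last _) (by simp [← Fin.succ_last, (Fin.castSucc_lt_last i₀).ne'])
      funext i
      obtain rfl | hi := eq_or_ne i i₀
      · exact (hc i).mul_right_eq_zero.mp hsum
      · exact hy i hi

theorem existsUnique_linearRow [Fintype A] (hc : ∀ i, IsUnit (c i))
    (hc1 : IsUnit (1 - ∑ i, c i)) {γ : Fin (m + 1) → Fin (m + 2)} (hγ : γ.Injective)
    (v : Fin (m + 1) → A) : ∃! y, ∃ a, ∀ s, linearRow c y (γ s) = v s + a := by
  obtain ⟨k, -, hk⟩ :=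
    Fintype.existsUnique_notMem_image_of_injective_of_card_eq_add_one γ hγ (by simp)
  let F : (Fin m → A) × A → Fin (m + 1) → A := fun p s => linearRow c p.1 (γ s) - p.2
  have hF : F.Injective := by
    rintro ⟨y, a⟩ ⟨z, b⟩ h
    have hoff : ∀ j ≠ k, linearRow c (y - z) j = a - b := by
      intro j hj
      obtain ⟨s, -, rfl⟩ := mem_image.mp (not_not.mp (mt (hk j) hj))
      rw [linearRow_sub, Pi.sub_apply]
      linear_combination congrFun h s
    obtain ⟨hyz, hab⟩ := eq_zero_of_forall_ne_linearRow_eq hc hc1 hoff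
    exact Prod.ext (sub_eq_zero.mp hyz) (sub_eq_zero.mp hab)
  obtain ⟨⟨y, a⟩, hya⟩ :=
    ((Fintype.bijective_iff_injective_and_card F).mpr ⟨hF, by simp [pow_succ]⟩).surjective v
  refine ⟨y, ⟨a, fun s => eq_add_of_sub_eq (congrFun hya s)⟩, ?_⟩
  rintro z ⟨b, hzb⟩
  have : F (z, b) = F (y, a) := by
    rw [hya]
    funext s
    simp [F, hzb]
  exact congrArg Prod.fst (hF this)

end LinearRow

theorem exists_isUnit_one_sub_sum {A : Type*} [CommRing A] {m : ℕ}
    (h : Even m ∨ IsUnit (2 : A)) :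
    ∃ c : Fin m → A, (∀ i, IsUnit (c i)) ∧ IsUnit (1 - ∑ i, c i) := by
  refine ⟨fun i => -(-1) ^ (i : ℕ), fun i => (isUnit_neg_one.pow _).neg, ?_⟩
  rw [sum_neg_distrib, Fin.sum_univ_eq_sum_range (fun i => (-1 : A) ^ i), neg_one_geom_sum]
  by_cases hm : Even m
  · simp [hm]
  · simpa [hm, one_add_one_eq_two] using h.resolve_left hm

open Fin.CommRing in
theorem Fin.isUnit_two_of_odd {q : ℕ} [NeZero q] (hq : Odd q) : IsUnit (2 : Fin q) := by
  obtain ⟨k, rfl⟩ := hq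
  refine .of_mul_eq_one ((k + 1 : ℕ) : Fin (2 * k + 1)) ?_
  have : ((2 * k + 1 : ℕ) : Fin (2 * k + 1)) = 0 := Fin.natCast_self _
  push_cast at this ⊢
  linear_combination this

/-- For all integers `q ≥ 2` and `t ≥ 1` such that `t` is odd or `q` is
odd, `E(t+1, q, t) = q^(t−1)`. -/
theorem Enum_succ_eq_pow (q t : ℕ) (hq : 2 ≤ q) (ht : 1 ≤ t) (hodd : Odd t ∨ Odd q) :
    Enum (t + 1) q t = q ^ (t - 1) := by
  obtain ⟨m, rfl⟩ : ∃ m, t = m + 1 := ⟨t - 1, by omega⟩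
  have : NeZero q := ⟨by omega⟩
  let := Fin.instCommRing q
  obtain ⟨c, hc, hc1⟩ := exists_isUnit_one_sub_sum (A := Fin q) (m := m)
    (hodd.imp (by simpa [parity_simps] using ·) Fin.isUnit_two_of_odd)
  let e : Fin (q ^ m) ≃ (Fin m → Fin q) := (Fintype.equivFinOfCardEq (by simp)).symm
  refine Enum_eq_pow_of_isDS (M := fun r => linearRow c (e r)) (by omega) (by omega) ?_
  exact isDS_of_existsUnique rfl fun γ hγ v =>
    e.existsUnique_congr_right.mpr (existsUnique_linearRow hc hc1 hγ.injective v)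
end

section
/- Let k ≥ 1, q > k, R* ≥ 1 and R ≥ R* be integers, and set R' = R + R*·T(q−1, k−1). If Γ(R, R*, q−1, k, k) is nonempty, then Γ(R', R*, q, k, k) is nonempty; that is, from a (q−1,k)-alphabet reduction pair of arrays of strength k with R rows in which the row (0,1,...,q−2) has multiplicity R* in the second array, one can construct a (q,k)-alphabet reduction pair of arrays of strength k with R' rows in which the row (0,1,...,q−1) has multiplicity R* in the second array. -/
/-- `T(a,b) = Σ_{r=0}^{b} C(a,r)·C(a−1−r, b−r)`. -/
def T (a b : ℕ) : ℕ :=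
  ∑ r ∈ Finset.range (b + 1), Nat.choose a r * Nat.choose (a - 1 - r) (b - r)

/-- `(Ψ, Φ)` is a `(q,p)`-alphabet reduction pair of arrays (ARPA) of strength `k`:
both arrays have `R` rows, `q` columns indexed by `Σ_q` and entries in `Σ_q`;
`Φ` contains at least one row equal to `(0, 1, ..., q-1)` (i.e. the identity);
every row of `Ψ` takes at most `p` pairwise distinct values; and for every `k` pairwise
distinct columns and every `v ∈ Σ_q^k`, `Ψ` and `Φ` have the same number of rows whose
restriction to these columns equals `v`. -/
def IsARPA (q p k R : ℕ) (Ψ Φ : Fin R → Fin q → Fin q) : Prop :=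
  (∃ r, ∀ j : Fin q, Φ r j = j) ∧
  (∀ r, (Finset.univ.image (Ψ r)).card ≤ p) ∧
  (∀ c : Fin k → Fin q, StrictMono c → ∀ v : Fin k → Fin q,
    (Finset.univ.filter fun r => ∀ s, Ψ r (c s) = v s).card =
      (Finset.univ.filter fun r => ∀ s, Φ r (c s) = v s).card)

/-- `Γ(R, R*, q, p, k)` is nonempty: there is a `(q,p)`-ARPA of strength `k` with `R` rows
in which the row `(0, 1, ..., q-1)` occurs exactly `R*` times in `Φ`. -/
def GammaNonempty (R Rstar q p k : ℕ) : Prop :=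
  ∃ Ψ Φ : Fin R → Fin q → Fin q, IsARPA q p k R Ψ Φ ∧
    (Finset.univ.filter fun r => ∀ j : Fin q, Φ r j = j).card = Rstar

/-- `γ(q,p,k)`: the supremum of `R*/R` over all integers `R ≥ R* > 0` such that
`Γ(R, R*, q, p, k)` is nonempty. -/
noncomputable def gammaARPA (q p k : ℕ) : ℝ :=
  sSup {x : ℝ | ∃ R Rstar : ℕ, 0 < Rstar ∧ Rstar ≤ R ∧ GammaNonempty R Rstar q p k ∧
    x = (Rstar : ℝ) / R}

/-!
Identify `Σ_q` with `Option Σ_{q-1}`, the new symbol and the new column both being `none`.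
Every old row `f` is extended by copying column `x₀` into the new column (`extendRow`). Any
restriction of an extended row to `k` columns is a function of a restriction of `f` to at most
`k` columns, so the extended arrays still have equal `k`-marginals. In `Φ`, however, the `R*`
identity rows have to become the identity of `Option Σ_{q-1}`, which differs from the extended
identity in the new column only.

This defect is repaired by `R*` copies of a block of rows `truncRow S z` (keep the entries in `S`,
send the other old columns to `none`, put `z` in the new column): one row for each `S` with
`|S| ≤ k - 1`, repeated `C(q - 2 - |S|, k - 1 - |S|)` times, so a block has `T(q - 1, k - 1)`
rows. In `Ψ` we take `z = none` when `k - 1 - |S|` is even and `z = x₀` when it is odd, and the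
other way round in `Φ`; such rows of `Ψ` have at most `k` distinct entries. On `k` columns
containing the new one, the difference of the block marginals is an alternating sum of these
multiplicities, which collapses by Chu–Vandermonde to the indicator of the identity pattern.
-/

open Finset

namespace AlphabetReduction

/-- Chu–Vandermonde for `n + (-n) = 0`, since `choose (-n) d = (-1) ^ d * choose (n + d - 1) d`. -/
theorem sum_choose_mul_neg_one_pow_mul_choose (n t : ℕ) (hn : 0 < n) :
    ∑ e ∈ range (t + 1), (n.choose e : ℤ) * ((-1) ^ (t - e) * (n + (t - e) - 1).choose (t - e))
      = if t = 0 then 1 else 0 := by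
  have h := Ring.add_choose_eq t (Commute.all (n : ℤ) (-n))
  rw [add_neg_cancel, Ring.choose_zero_ite, Nat.sum_antidiagonal_eq_sum_range_succ_mk] at h
  rw [h]
  refine sum_congr rfl fun e _ => ?_
  generalize t - e = d
  have hcast : (n : ℤ) + d - 1 = ((n + d - 1 : ℕ) : ℤ) := by omega
  rw [Ring.choose_natCast, Ring.choose_neg, hcast, Ring.choose_natCast, Int.negOnePow_def,
    Units.smul_def]
  simp

theorem lt_of_not_even_sub {j s : ℕ} (h : ¬ Even (j - s)) : s < j := by
  by_contra hs
  exact h (by rw [Nat.sub_eq_zero_of_le (not_lt.1 hs)]; exact ⟨0, rfl⟩)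

def blockMult (m j s : ℕ) : ℕ := if s ≤ j then (m - 1 - s).choose (j - s) else 0

section Blocks

variable {X : Type*} [Fintype X]

theorem sum_blockMult {j : ℕ} (hj : j < Fintype.card X) :
    ∑ S : Finset X, blockMult (Fintype.card X) j #S = T (Fintype.card X) j := by
  rw [← powerset_univ, sum_powerset_apply_card, card_univ, T]
  refine (sum_subset (range_subset_range.2 (by omega)) fun r _ hr => ?_).symm.trans
    (sum_congr rfl fun r hr => ?_)
  · simp_all [blockMult]
  · simp_all [blockMult]

theorem le_of_lt_blockMult {m j s i : ℕ} (h : i < blockMult m j s) : s ≤ j := by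
  by_contra hs
  simp [blockMult, hs] at h

abbrev BlockIdx (X : Type*) [Fintype X] (j : ℕ) :=
  Σ S : Finset X, Fin (blockMult (Fintype.card X) j #S)

theorem card_blockIdx {j : ℕ} (hj : j < Fintype.card X) :
    Fintype.card (BlockIdx X j) = T (Fintype.card X) j := by
  simp [Fintype.card_sigma, sum_blockMult hj]

theorem sum_inter_eq_eq_sum_powerset_compl [DecidableEq X] {M : Type*} [AddCommMonoid M]
    (f : Finset X → M) {B C : Finset X} (hBC : B ⊆ C) :
    ∑ S with S ∩ C = B, f S = ∑ E ∈ Cᶜ.powerset, f (B ∪ E) := by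
  have hunion {S : Finset X} (hS : S ∩ C = B) : B ∪ S \ C = S := by
    rw [← hS, union_comm, sdiff_union_inter]
  refine sum_nbij' (fun S => S \ C) (fun E => B ∪ E) ?_ ?_ ?_ ?_ ?_
  · simp [subset_iff]
  · intro E hE
    simp only [mem_powerset, subset_compl_iff_disjoint_right] at hE
    simp [union_inter_distrib_right, inter_eq_left.2 hBC, disjoint_iff_inter_eq_empty.1 hE]
  · intro S hS
    exact hunion (mem_filter.1 hS).2
  · intro E hE
    simp only [mem_powerset, subset_compl_iff_disjoint_right] at hE
    rw [union_sdiff_distrib, sdiff_eq_empty_iff_subset.2 hBC, empty_union, hE.sdiff_eq_left]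
  · intro S hS
    rw [hunion (mem_filter.1 hS).2]

theorem sum_neg_one_pow_mul_blockMult [DecidableEq X] {j : ℕ} (hj : j < Fintype.card X)
    {B C : Finset X} (hBC : B ⊆ C) (hC : #C = j) :
    ∑ S with S ∩ C = B, (-1 : ℤ) ^ (j - #S) * blockMult (Fintype.card X) j #S
      = if B = C then 1 else 0 := by
  obtain ⟨n, hn⟩ : ∃ n, Fintype.card X = j + n := ⟨_, (Nat.add_sub_of_le hj.le).symm⟩
  obtain ⟨t, ht⟩ : ∃ t, j = #B + t := ⟨_, (Nat.add_sub_of_le (hC ▸ card_le_card hBC)).symm⟩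
  let g (e : ℕ) : ℤ := n.choose e * ((-1) ^ (j - (#B + e)) * blockMult (j + n) j (#B + e))
  calc ∑ S with S ∩ C = B, (-1 : ℤ) ^ (j - #S) * blockMult (Fintype.card X) j #S
      = ∑ e ∈ range (n + 1), g e := by
        rw [sum_inter_eq_eq_sum_powerset_compl _ hBC,
          sum_congr rfl fun E hE => by rw [card_union_of_disjoint
            (disjoint_compl_right.mono hBC (mem_powerset.1 hE))],
          sum_powerset_apply_card (fun e => (-1 : ℤ) ^ (j - (#B + e)) * blockMult _ j (#B + e)),
          card_compl, hC, hn, Nat.add_sub_cancel_left]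
        rfl
    _ = ∑ e ∈ range (t + 1), g e := by
        rw [sum_subset (range_subset_range.2 (Nat.le_add_right (n + 1) t)),
          ← sum_subset (range_subset_range.2 (by omega : t + 1 ≤ n + 1 + t))]
        · intro e _ he
          simp_all [g, blockMult]
        · intro e _ he
          simp_all [g, Nat.choose_eq_zero_of_lt]
    _ = ∑ e ∈ range (t + 1),
          (n.choose e : ℤ) * ((-1) ^ (t - e) * (n + (t - e) - 1).choose (t - e)) := by
        refine sum_congr rfl fun e he => ?_
        have he : e ≤ t := Nat.lt_succ_iff.1 (mem_range.1 he)
        simp only [g, blockMult, if_pos (by omega : #B + e ≤ j)]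
        rw [show j - (#B + e) = t - e by omega,
          show j + n - 1 - (#B + e) = n + (t - e) - 1 by omega]
    _ = if B = C then 1 else 0 := by
        rw [sum_choose_mul_neg_one_pow_mul_choose n t (by omega)]
        refine if_congr ⟨fun h0 => eq_of_subset_of_card_le hBC (by omega), fun hB => ?_⟩ rfl rfl
        subst hB
        omega

theorem sum_neg_one_pow_mul_blockMult_mul_ite [DecidableEq X] {j : ℕ} (hj : j < Fintype.card X)
    {C : Finset X} (hC : #C = j) (v : X → Option X) :
    ∑ S : Finset X, (-1 : ℤ) ^ (j - #S) * blockMult (Fintype.card X) j #S *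
        (if ∀ x ∈ C, v x = if x ∈ S then some x else none then 1 else 0)
      = if ∀ x ∈ C, v x = some x then 1 else 0 := by
  by_cases hgood : ∀ x ∈ C, v x = some x ∨ v x = none
  · have hP (S : Finset X) : (∀ x ∈ C, v x = if x ∈ S then some x else none)
        ↔ S ∩ C = C.filter fun x => v x = some x := by
      simp only [Finset.ext_iff, mem_inter, mem_filter]
      constructor
      · intro h x
        by_cases hx : x ∈ C <;> by_cases hxS : x ∈ S <;> simp [hx, hxS, h x]
      · intro h x hx
        by_cases hxS : x ∈ S
        · simpa [hxS] using ((h x).1 ⟨hxS, hx⟩).2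
        · have hne : v x ≠ some x := fun hv => hxS ((h x).2 ⟨hx, hv⟩).1
          simpa [hxS, hne] using hgood x hx
    have hI : (∀ x ∈ C, v x = some x) ↔ C.filter (fun x => v x = some x) = C := filter_eq_self.symm
    simp_rw [hP, hI, mul_ite, mul_one, mul_zero]
    rw [← sum_filter]
    exact sum_neg_one_pow_mul_blockMult hj (filter_subset _ _) hC
  · have hP (S : Finset X) : ¬ ∀ x ∈ C, v x = if x ∈ S then some x else none := by
      intro h
      exact hgood fun x hx => by rw [h x hx]; split_ifs <;> simp
    have hI : ¬ ∀ x ∈ C, v x = some x := fun h => hgood fun x hx => .inl (h x hx)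
    simp [hP, hI]

theorem sum_blockMult_even_eq_sum_blockMult_odd_add [DecidableEq X] {j : ℕ}
    (hj : j < Fintype.card X) {C : Finset X} (hC : #C = j) (v : X → Option X) :
    ∑ S : Finset X, blockMult (Fintype.card X) j #S *
        (if Even (j - #S) ∧ ∀ x ∈ C, v x = if x ∈ S then some x else none then 1 else 0)
      = ∑ S : Finset X, blockMult (Fintype.card X) j #S *
          (if ¬ Even (j - #S) ∧ ∀ x ∈ C, v x = if x ∈ S then some x else none then 1 else 0)
        + if ∀ x ∈ C, v x = some x then 1 else 0 := by
  zify
  rw [← sum_neg_one_pow_mul_blockMult_mul_ite hj hC v, ← sum_add_distrib]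
  refine sum_congr rfl fun S _ => ?_
  by_cases he : Even (j - #S)
  · simp only [he, not_true_eq_false, true_and, false_and, if_false, he.neg_one_pow]
    ring
  · simp only [he, not_false_eq_true, true_and, false_and, if_false,
      (Nat.not_even_iff_odd.1 he).neg_one_pow]
    ring

end Blocks

section Marginal

variable {ρ ρ' ι ι' α β : Type*} [Fintype ρ] [Fintype ρ']

def marginal (A : ρ → ι → α) (D : Finset ι) : Multiset (D → α) :=
  ∑ r, {D.restrict (A r)}

theorem countP_marginal (A : ρ → ι → α) (D : Finset ι) (p : (D → α) → Prop) [DecidablePred p] :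
    (marginal A D).countP p = #{r | p (D.restrict (A r))} := by
  rw [marginal, ← Multiset.coe_countPAddMonoidHom, map_sum, card_filter]
  refine sum_congr rfl fun r _ => ?_
  rw [Multiset.coe_countPAddMonoidHom, ← Multiset.cons_zero, Multiset.countP_cons,
    Multiset.countP_zero, zero_add]

theorem marginal_comp (A : ρ → ι → α) (σ : ι' → ι) (g : α → β) {D : Finset ι'}
    {D' : Finset ι} (hσ : ∀ x ∈ D, σ x ∈ D') :
    marginal (fun r => g ∘ A r ∘ σ) D
      = (marginal A D').map fun w (x : D) => g (w ⟨σ x, hσ x x.2⟩) := by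
  rw [marginal, marginal, ← Multiset.coe_mapAddMonoidHom, map_sum]
  simp only [Multiset.coe_mapAddMonoidHom, Multiset.map_singleton]
  rfl

theorem marginal_comp_equiv (A : ρ → ι → α) (e : ρ' ≃ ρ) (D : Finset ι) :
    marginal (fun r => A (e r)) D = marginal A D :=
  Equiv.sum_comp e fun r => {D.restrict (A r)}

theorem marginal_sumElim (A : ρ → ι → α) (B : ρ' → ι → α) (D : Finset ι) :
    marginal (Sum.elim A B) D = marginal A D + marginal B D :=
  Fintype.sum_sum_type _

theorem marginal_ite_add (A : ρ → ι → α) (a b : ι → α) (q : ρ → Prop) [DecidablePred q]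
    (hA : ∀ r, q r → A r = a) (D : Finset ι) :
    marginal (fun r => if q r then b else A r) D + #{r | q r} • {D.restrict a}
      = marginal A D + #{r | q r} • {D.restrict b} := by
  simp only [marginal, ← sum_const, sum_filter, ← sum_add_distrib]
  refine sum_congr rfl fun r _ => ?_
  by_cases hr : q r <;> simp [hr, hA, add_comm]

theorem marginal_fin_prod_sigma {κ : Type*} [Fintype κ] (m : κ → ℕ) (n : ℕ) (F : κ → ι → α)
    (D : Finset ι) :
    marginal (fun b : Fin n × (Σ i, Fin (m i)) => F b.2.1) D
      = n • ∑ i, m i • {D.restrict (F i)} := by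
  simp [marginal, Fintype.sum_prod_type, Fintype.sum_sigma]

def SameMarginals (k : ℕ) (A B : ρ → ι → α) : Prop :=
  ∀ D : Finset ι, #D = k → marginal A D = marginal B D

theorem SameMarginals.marginal_eq_of_card_le [Fintype ι] {k : ℕ} {A B : ρ → ι → α}
    (h : SameMarginals k A B) (hk : k ≤ Fintype.card ι) {D : Finset ι} (hD : #D ≤ k) :
    marginal A D = marginal B D := by
  obtain ⟨D', hDD', hD'⟩ := exists_superset_card_eq hD hk
  have hA := marginal_comp A id id fun x hx => hDD' hx
  have hB := marginal_comp B id id fun x hx => hDD' hx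
  exact hA.trans ((congrArg _ (h D' hD')).trans hB.symm)

theorem SameMarginals.comp [Fintype ι] [DecidableEq ι] {k : ℕ} {A B : ρ → ι → α}
    (h : SameMarginals k A B) (hk : k ≤ Fintype.card ι) (σ : ι' → ι) (g : α → β) :
    SameMarginals k (fun r => g ∘ A r ∘ σ) (fun r => g ∘ B r ∘ σ) := by
  intro D hD
  have hσ : ∀ x ∈ D, σ x ∈ D.image σ := fun x hx => mem_image_of_mem σ hx
  rw [marginal_comp A σ g hσ, marginal_comp B σ g hσ,
    h.marginal_eq_of_card_le hk (hD ▸ card_image_le)]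

theorem SameMarginals.comp_equiv {k : ℕ} {A B : ρ → ι → α} (h : SameMarginals k A B)
    (e : ρ' ≃ ρ) : SameMarginals k (fun r => A (e r)) (fun r => B (e r)) := by
  intro D hD
  rw [marginal_comp_equiv, marginal_comp_equiv, h D hD]

theorem sameMarginals_iff [DecidableEq α] {q k : ℕ} (A B : ρ → Fin q → α) :
    (∀ c : Fin k → Fin q, StrictMono c → ∀ v : Fin k → α,
      #{r | ∀ s, A r (c s) = v s} = #{r | ∀ s, B r (c s) = v s}) ↔ SameMarginals k A B := by
  constructor
  · intro h D hD
    ext w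
    let c := D.orderEmbOfFin hD
    have hw (f : Fin q → α) :
        w = D.restrict f ↔ ∀ s, f (c s) = w ⟨c s, D.orderEmbOfFin_mem hD s⟩ := by
      refine ⟨fun hf s => by rw [hf]; rfl, fun hf => funext fun x => ?_⟩
      obtain ⟨s, hs⟩ : (x : Fin q) ∈ Set.range c := by
        rw [D.range_orderEmbOfFin hD]; exact x.2
      have : x = ⟨c s, D.orderEmbOfFin_mem hD s⟩ := Subtype.ext hs.symm
      rw [this, ← hf s]; rfl
    simp only [Multiset.count, countP_marginal, hw]
    exact h c c.strictMono _
  · intro h c hc v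
    have hD : #(univ.image c) = k := by rw [card_image_of_injective _ hc.injective, card_fin]
    have := congrArg (Multiset.countP fun w : (univ.image c) → α =>
      ∀ s, w ⟨c s, mem_image_of_mem c (mem_univ s)⟩ = v s) (h _ hD)
    simp only [countP_marginal, Finset.restrict] at this
    convert this using 2 <;> exact filter_congr_decidable _ _ _

end Marginal

section ReductionPair

variable {ρ ρ' X Y : Type*} [Fintype ρ] [Fintype ρ'] [Fintype X] [DecidableEq X]
  [Fintype Y] [DecidableEq Y]

structure IsReductionPair (p k Rstar : ℕ) (Ψ Φ : ρ → X → X) : Prop where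
  card_image_le : ∀ r, #(univ.image (Ψ r)) ≤ p
  sameMarginals : SameMarginals k Ψ Φ
  card_filter_eq_id : #{r | Φ r = id} = Rstar

theorem card_image_comp_le {α β γ δ : Type*} [Fintype α] [Fintype γ] [DecidableEq β]
    [DecidableEq δ] (f : α → β) (σ : γ → α) (g : β → δ) :
    #(univ.image (g ∘ f ∘ σ)) ≤ #(univ.image f) :=
  calc #(univ.image (g ∘ f ∘ σ)) ≤ #((univ.image f).image g) :=
        card_le_card fun y => by simp only [mem_image, mem_univ, true_and]; grind
    _ ≤ #(univ.image f) := card_image_le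

theorem IsReductionPair.conj {p k Rstar : ℕ} {Ψ Φ : ρ → X → X}
    (h : IsReductionPair p k Rstar Ψ Φ) (hk : k ≤ Fintype.card X) (eρ : ρ' ≃ ρ) (e : Y ≃ X) :
    IsReductionPair p k Rstar (fun r => e.symm ∘ Ψ (eρ r) ∘ e)
      (fun r => e.symm ∘ Φ (eρ r) ∘ e) where
  card_image_le r := (card_image_comp_le _ _ _).trans (h.card_image_le _)
  sameMarginals := (h.sameMarginals.comp hk e e.symm).comp_equiv eρ
  card_filter_eq_id := by
    have hconj (f : X → X) : e.symm ∘ f ∘ e = id ↔ f = id := by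
      refine ⟨fun hf => funext fun x => ?_, fun hf => by simp [hf]⟩
      simpa using congrFun hf (e.symm x)
    rw [← h.card_filter_eq_id]
    exact card_equiv eρ (by simp [hconj])

end ReductionPair

theorem gammaNonempty_iff {R Rstar q p k : ℕ} :
    GammaNonempty R Rstar q p k ↔
      0 < Rstar ∧ ∃ Ψ Φ : Fin R → Fin q → Fin q, IsReductionPair p k Rstar Ψ Φ := by
  have hid (f : Fin q → Fin q) : (∀ j, f j = j) ↔ f = id := funext_iff.symm
  simp only [GammaNonempty, IsARPA, hid, sameMarginals_iff]
  constructor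
  · rintro ⟨Ψ, Φ, ⟨⟨r, hr⟩, hdiv, hstr⟩, hcard⟩
    exact ⟨hcard ▸ card_pos.2 ⟨r, by simpa using hr⟩, Ψ, Φ, hdiv, hstr, hcard⟩
  · rintro ⟨hR, Ψ, Φ, hdiv, hstr, hcard⟩
    obtain ⟨r, hr⟩ := card_pos.1 (hcard ▸ hR)
    exact ⟨Ψ, Φ, ⟨⟨r, by simpa using hr⟩, hdiv, hstr⟩, hcard⟩

section Construction

variable {X : Type*}

def extendRow (x₀ : X) (f : X → X) : Option X → Option X :=
  some ∘ f ∘ fun o => o.getD x₀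

theorem extendRow_ne_id (x₀ : X) (f : X → X) : extendRow x₀ f ≠ id :=
  fun h => Option.some_ne_none _ (congrFun h none)

variable [DecidableEq X]

def truncRow (S : Finset X) (z : Option X) : Option X → Option X
  | none => z
  | some x => if x ∈ S then some x else none

def psiBlock (x₀ : X) (j : ℕ) (S : Finset X) : Option X → Option X :=
  truncRow S (if Even (j - #S) then none else some x₀)

def phiBlock (x₀ : X) (j : ℕ) (S : Finset X) : Option X → Option X :=
  truncRow S (if Even (j - #S) then some x₀ else none)

variable [Fintype X] {ρ : Type*} [Fintype ρ]

def extendPsi (x₀ : X) (j Rstar : ℕ) (Ψ : ρ → X → X) :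
    ρ ⊕ Fin Rstar × BlockIdx X j → Option X → Option X :=
  Sum.elim (fun r => extendRow x₀ (Ψ r)) fun b => psiBlock x₀ j b.2.1

def extendPhi (x₀ : X) (j Rstar : ℕ) (Φ : ρ → X → X) :
    ρ ⊕ Fin Rstar × BlockIdx X j → Option X → Option X :=
  Sum.elim (fun r => if Φ r = id then id else extendRow x₀ (Φ r)) fun b => phiBlock x₀ j b.2.1

theorem image_truncRow_subset (S : Finset X) (z : Option X) :
    univ.image (truncRow S z) ⊆ insert z (insert none (S.image some)) := by
  intro y hy
  obtain ⟨_ | x, -, rfl⟩ := mem_image.1 hy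
  · exact mem_insert_self _ _
  · by_cases hx : x ∈ S <;> simp [truncRow, hx]

theorem card_image_truncRow_le (S : Finset X) (z : Option X) :
    #(univ.image (truncRow S z)) ≤ #S + 2 := by
  have h := card_le_card (image_truncRow_subset S z)
  have := card_insert_le z (insert none (S.image some))
  have := card_insert_le none (S.image some)
  rw [card_image_of_injective _ (Option.some_injective X)] at *
  omega

theorem card_image_truncRow_none_le (S : Finset X) :
    #(univ.image (truncRow S none)) ≤ #S + 1 := by
  have h := card_le_card (image_truncRow_subset S none)
  rw [insert_idem] at h
  have := card_insert_le none (S.image some)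
  rw [card_image_of_injective _ (Option.some_injective X)] at *
  omega

theorem card_image_psiBlock_le (x₀ : X) {j : ℕ} {S : Finset X} (hS : #S ≤ j) :
    #(univ.image (psiBlock x₀ j S)) ≤ j + 1 := by
  unfold psiBlock
  split_ifs with he
  · exact (card_image_truncRow_none_le S).trans (by omega)
  · exact (card_image_truncRow_le S _).trans (by have := lt_of_not_even_sub he; omega)

theorem phiBlock_ne_id (x₀ : X) {j : ℕ} (hj : j < Fintype.card X) (S : Finset X) :
    phiBlock x₀ j S ≠ id := by
  intro h
  unfold phiBlock at h
  split_ifs at h with he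
  · exact Option.some_ne_none _ (congrFun h none)
  · obtain ⟨x, hx⟩ : ∃ x, x ∉ S := by
      by_contra! hall
      have := lt_of_not_even_sub he
      rw [eq_univ_iff_forall.2 hall, card_univ] at this
      omega
    simpa [truncRow, hx] using congrFun h (some x)

theorem card_filter_extendPhi_eq_id (x₀ : X) {j Rstar : ℕ} (hj : j < Fintype.card X)
    (Φ : ρ → X → X) : #{r | extendPhi x₀ j Rstar Φ r = id} = #{r | Φ r = id} := by
  rw [card_filter, card_filter, Fintype.sum_sum_type]
  simp [extendPhi, phiBlock_ne_id x₀ hj, extendRow_ne_id]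

theorem sum_psiBlock_add_extendRow_id (x₀ : X) {j : ℕ} (hj : j < Fintype.card X)
    {D : Finset (Option X)} (hD : #D = j + 1) :
    ∑ S, blockMult (Fintype.card X) j #S • {D.restrict (psiBlock x₀ j S)}
        + {D.restrict (extendRow x₀ id)}
      = (∑ S, blockMult (Fintype.card X) j #S • {D.restrict (phiBlock x₀ j S)}
        + {D.restrict id} : Multiset (D → Option X)) := by
  by_cases hn : none ∈ D
  swap
  · have hblock (S : Finset X) : D.restrict (psiBlock x₀ j S) = D.restrict (phiBlock x₀ j S) :=
      funext fun ⟨o, ho⟩ => by cases o; exacts [absurd ho hn, rfl]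
    have hid : D.restrict (extendRow x₀ id) = D.restrict id :=
      funext fun ⟨o, ho⟩ => by cases o; exacts [absurd ho hn, rfl]
    simp only [hblock, hid]
  ext w
  let v (x : X) : Option X := if h : some x ∈ D then w ⟨some x, h⟩ else none
  have hC : #D.eraseNone = j := by
    rw [card_eraseNone_eq_card_erase, card_erase_of_mem hn, hD, Nat.add_sub_cancel]
  have hw (f : Option X → Option X) :
      w = D.restrict f ↔ w ⟨none, hn⟩ = f none ∧ ∀ x ∈ D.eraseNone, v x = f (some x) := by
    refine ⟨fun h => ⟨by rw [h]; rfl, fun x hx => ?_⟩, fun ⟨h0, hs⟩ => funext fun ⟨o, ho⟩ => ?_⟩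
    · simp [v, mem_eraseNone.1 hx, h]
    · cases o with
      | none => exact h0
      | some x => simpa [v, ho] using hs x (mem_eraseNone.2 ho)
  simp only [Multiset.count_add, Multiset.count_sum', Multiset.count_nsmul,
    Multiset.count_singleton, hw]
  simp only [psiBlock, phiBlock, truncRow, extendRow, Function.comp_apply, Option.getD_none,
    Option.getD_some, id]
  have hsplit := sum_blockMult_even_eq_sum_blockMult_odd_add hj hC v
  by_cases hnone : w ⟨none, hn⟩ = none
  · simpa [hnone] using hsplit
  by_cases hx₀ : w ⟨none, hn⟩ = some x₀
  · simpa [hx₀] using hsplit.symm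
  · simp [hnone, hx₀, eq_ite_iff]

theorem IsReductionPair.extend {p j Rstar : ℕ} {Ψ Φ : ρ → X → X}
    (h : IsReductionPair p (j + 1) Rstar Ψ Φ) (hjp : j + 1 ≤ p) (hj : j < Fintype.card X)
    (x₀ : X) :
    IsReductionPair p (j + 1) Rstar (extendPsi x₀ j Rstar Ψ) (extendPhi x₀ j Rstar Φ) where
  card_image_le := by
    rintro (r | ⟨-, S, i⟩)
    · exact (card_image_comp_le _ _ _).trans (h.card_image_le r)
    · exact (card_image_psiBlock_le x₀ (le_of_lt_blockMult i.2)).trans hjp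
  sameMarginals D hD := by
    have hext : marginal (fun r => extendRow x₀ (Ψ r)) D
        = marginal (fun r => extendRow x₀ (Φ r)) D :=
      h.sameMarginals.comp (by omega) (fun o : Option X => o.getD x₀) some D hD
    apply add_right_cancel (b := Rstar • {D.restrict (extendRow x₀ id)})
    calc marginal (extendPsi x₀ j Rstar Ψ) D + Rstar • {D.restrict (extendRow x₀ id)}
        = marginal (fun r => extendRow x₀ (Ψ r)) D + Rstar •
            (∑ S, blockMult (Fintype.card X) j #S • {D.restrict (psiBlock x₀ j S)}
              + {D.restrict (extendRow x₀ id)}) := by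
          rw [extendPsi, marginal_sumElim, marginal_fin_prod_sigma, smul_add, add_assoc]
      _ = marginal (fun r => extendRow x₀ (Φ r)) D + Rstar •
            (∑ S, blockMult (Fintype.card X) j #S • {D.restrict (phiBlock x₀ j S)}
              + {D.restrict id}) := by
          rw [hext, sum_psiBlock_add_extendRow_id x₀ hj hD]
      _ = marginal (fun r => if Φ r = id then id else extendRow x₀ (Φ r)) D
            + Rstar • {D.restrict (extendRow x₀ id)}
            + Rstar • ∑ S, blockMult (Fintype.card X) j #S • {D.restrict (phiBlock x₀ j S)} := by
          rw [← h.card_filter_eq_id, marginal_ite_add _ _ _ _ fun r hr => by rw [hr], smul_add]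
          abel
      _ = marginal (extendPhi x₀ j Rstar Φ) D + Rstar • {D.restrict (extendRow x₀ id)} := by
          rw [extendPhi, marginal_sumElim, marginal_fin_prod_sigma]
          abel
  card_filter_eq_id := (card_filter_extendPhi_eq_id x₀ hj Φ).trans h.card_filter_eq_id

end Construction

end AlphabetReduction

open AlphabetReduction

theorem GammaNonempty_step_general
    (k q R Rstar : ℕ) (hk : 1 ≤ k) (hq : k < q)
    (h : GammaNonempty R Rstar (q - 1) k k) :
    GammaNonempty (R + Rstar * T (q - 1) (k - 1)) Rstar q k k := by
  obtain ⟨m, rfl⟩ : ∃ m, q = m + 1 := ⟨q - 1, by omega⟩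
  obtain ⟨j, rfl⟩ : ∃ j, k = j + 1 := ⟨k - 1, by omega⟩
  rw [Nat.add_sub_cancel] at h ⊢
  obtain ⟨hR, Ψ, Φ, hΨΦ⟩ := gammaNonempty_iff.1 h
  have hj : j < Fintype.card (Fin m) := by rw [Fintype.card_fin]; omega
  have hcard : Fintype.card (Fin R ⊕ Fin Rstar × BlockIdx (Fin m) j) = R + Rstar * T m j := by
    simp [card_blockIdx hj]
  have hext := hΨΦ.extend le_rfl hj ⟨0, by omega⟩
  exact gammaNonempty_iff.2 ⟨hR, _, _, hext.conj (by simp; omega)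
    (Fintype.equivFinOfCardEq hcard).symm finSuccEquivLast⟩

/-- Let `k ≥ 1`, `q > k`, `R* ≥ 1` and `R ≥ R*`, and set
`R' = R + R*·T(q−1, k−1)`. If `Γ(R, R*, q−1, k, k)` is nonempty then
`Γ(R', R*, q, k, k)` is nonempty. -/
theorem GammaNonempty_step
    (k q R Rstar : ℕ) (hk : 1 ≤ k) (hq : k < q) (hRs : 1 ≤ Rstar) (hR : Rstar ≤ R)
    (h : GammaNonempty R Rstar (q - 1) k k) :
    GammaNonempty (R + Rstar * T (q - 1) (k - 1)) Rstar q k k :=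
  GammaNonempty_step_general k q R Rstar hk hq h
end

section
/- For all natural numbers a and b with a > b ≥ 2, (T(a,b) + 1)/2 ≤ (2a − b)^b/(2·b!). -/
open Finset Polynomial
open scoped Nat

/-- `∏_{j ≤ n, j ≠ r} (x - j)`. -/
noncomputable def omitProd (x : ℝ) (n r : ℕ) : ℝ :=
  (descPochhammer ℝ r).eval x * (descPochhammer ℝ (n - r)).eval (x - (r + 1))

noncomputable def pairProd (x : ℝ) (n r : ℕ) : ℝ := (x - r) * (x - n + r)

variable {x : ℝ} {n r : ℕ}

lemma omitProd_mul_sub_eq (hr : r ≤ n) :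
    omitProd x n r * (x - r) = (descPochhammer ℝ (n + 1)).eval x := by
  have h := congrArg (eval x) (descPochhammer_mul (R := ℝ) (r + 1) (n - r))
  rw [show r + 1 + (n - r) = n + 1 by omega, eval_mul, eval_comp, descPochhammer_succ_eval] at h
  simp only [eval_sub, eval_add, eval_X, eval_one, eval_natCast, Nat.cast_add, Nat.cast_one] at h
  rw [← h, omitProd]
  ring

lemma factorial_mul_T {a : ℕ} (h : n < a) :
    (n ! : ℝ) * T a n = ∑ r ∈ range (n + 1), n.choose r * omitProd a n r := by
  rw [T, Nat.cast_sum, mul_sum]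
  refine sum_congr rfl fun r hr => ?_
  have hr : r ≤ n := Nat.lt_succ_iff.mp (mem_range.mp hr)
  have hcast : ((a - 1 - r : ℕ) : ℝ) = a - (r + 1) := by
    rw [Nat.cast_sub (by omega), Nat.cast_sub (by omega)]; ring
  rw [omitProd, ← hcast, Nat.cast_mul, Nat.cast_choose_eq_descPochhammer_div,
    Nat.cast_choose_eq_descPochhammer_div, Nat.cast_choose ℝ hr]
  field_simp

lemma pairProd_sub_eq (hr : r ≤ n) : pairProd x n (n - r) = pairProd x n r := by
  rw [pairProd, pairProd, Nat.cast_sub hr]; ring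

lemma pairProd_nonneg (hr : r ≤ n) (hx : n ≤ x) : 0 ≤ pairProd x n r := by
  have : (r : ℝ) ≤ n := by exact_mod_cast hr
  exact mul_nonneg (by linarith) (by linarith [(r.cast_nonneg : (0 : ℝ) ≤ r)])

lemma pairProd_pos (hr : r ≤ n) (hx : n < x) : 0 < pairProd x n r := by
  have : (r : ℝ) ≤ n := by exact_mod_cast hr
  exact mul_pos (by linarith) (by linarith [(r.cast_nonneg : (0 : ℝ) ≤ r)])

lemma pairProd_le (x : ℝ) (n r : ℕ) : pairProd x n r ≤ (x - n / 2) ^ 2 := by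
  rw [pairProd]
  nlinarith [sq_nonneg ((n : ℝ) / 2 - r)]

lemma descPochhammer_eval_sq (x : ℝ) (n : ℕ) :
    (descPochhammer ℝ (n + 1)).eval x ^ 2 = ∏ j ∈ range (n + 1), pairProd x n j := by
  have hrefl : ∏ j ∈ range (n + 1), (x - ((n - j : ℕ) : ℝ)) = ∏ j ∈ range (n + 1), (x - n + j) :=
    prod_congr rfl fun j hj => by
      rw [Nat.cast_sub (Nat.lt_succ_iff.mp (mem_range.mp hj))]; ring
  rw [sq, descPochhammer_eval_eq_prod_range]
  conv_lhs => arg 2; rw [← prod_range_reflect]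
  rw [add_tsub_cancel_right, hrefl, ← prod_mul_distrib]
  rfl

lemma descPochhammer_eval_sq_le (hx : n ≤ x) {s : Finset ℕ} (hs : s ⊆ range (n + 1)) :
    (descPochhammer ℝ (n + 1)).eval x ^ 2 ≤
      (∏ j ∈ s, pairProd x n j) * ((x - n / 2) ^ 2) ^ (n + 1 - #s) := by
  have hnonneg : ∀ j ∈ range (n + 1), 0 ≤ pairProd x n j := fun j hj =>
    pairProd_nonneg (Nat.lt_succ_iff.mp (mem_range.mp hj)) hx
  have hrest : ∏ j ∈ range (n + 1) \ s, pairProd x n j ≤ ((x - n / 2) ^ 2) ^ (n + 1 - #s) := by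
    have := prod_le_prod (s := range (n + 1) \ s) (fun j hj => hnonneg j (sdiff_subset hj))
      fun j _ => pairProd_le x n j
    rwa [prod_const, card_sdiff_of_subset hs, card_range] at this
  rw [descPochhammer_eval_sq, ← prod_sdiff hs, mul_comm]
  exact mul_le_mul_of_nonneg_left hrest (prod_nonneg fun j hj => hnonneg j (hs hj))

lemma descPochhammer_eval_le (hx : n ≤ x) :
    (descPochhammer ℝ (n + 1)).eval x ≤ (x - n / 2) ^ (n + 1) := by
  refine le_of_sq_le_sq ?_ (pow_nonneg (by linarith) _)
  simpa [← pow_mul, mul_comm] using descPochhammer_eval_sq_le hx (empty_subset _)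

lemma factorial_le_pow_half (n : ℕ) : ((n + 1)! : ℝ) ≤ ((n + 2) / 2) ^ (n + 1) := by
  have h := descPochhammer_eval_le (x := n + 1) (n := n) (by linarith)
  rw [← Nat.cast_add_one, descPochhammer_eval_eq_descFactorial, Nat.descFactorial_self] at h
  convert h using 2
  push_cast; ring

lemma mul_descPochhammer_eval_le (hr : r ≤ n) (hx : n ≤ x) :
    (x - n / 2) * (descPochhammer ℝ (n + 1)).eval x ≤ pairProd x n r * (x - n / 2) ^ n := by
  refine le_of_sq_le_sq ?_ (mul_nonneg (pairProd_nonneg hr hx) (pow_nonneg (by linarith) _))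
  rw [mul_pow, mul_pow, ← pow_mul, mul_comm n 2, pow_mul]
  rcases eq_or_ne r (n - r) with h | h
  · have hs : {r} ⊆ range (n + 1) := by simpa using Nat.lt_succ_of_le hr
    have hsq : pairProd x n r = (x - n / 2) ^ 2 := by
      have hr₂ : (r : ℝ) = n / 2 := by
        rw [eq_div_iff two_ne_zero]; exact_mod_cast (by omega : r * 2 = n)
      rw [pairProd, hr₂]; ring
    have := descPochhammer_eval_sq_le hx hs
    rw [prod_singleton, card_singleton, add_tsub_cancel_right] at this
    calc _ ≤ (x - n / 2) ^ 2 * (pairProd x n r * ((x - n / 2) ^ 2) ^ n) :=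
          mul_le_mul_of_nonneg_left this (sq_nonneg _)
      _ = _ := by rw [hsq]; ring
  · have hs : {r, n - r} ⊆ range (n + 1) := by
      intro j hj; simp only [mem_insert, mem_singleton] at hj; simp only [mem_range]; omega
    have := descPochhammer_eval_sq_le hx hs
    rw [prod_pair h, card_pair h, pairProd_sub_eq hr] at this
    obtain ⟨k, rfl⟩ : ∃ k, n = k + 1 := ⟨n - 1, by omega⟩
    calc _ ≤ (x - (k + 1 : ℕ) / 2) ^ 2 * (pairProd x (k + 1) r * pairProd x (k + 1) r *
            ((x - (k + 1 : ℕ) / 2) ^ 2) ^ (k + 1 + 1 - 2)) :=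
          mul_le_mul_of_nonneg_left this (sq_nonneg _)
      _ = _ := by rw [show k + 1 + 1 - 2 = k by omega]; ring

lemma omitProd_add_omitProd_mul_pairProd (hr : r ≤ n) :
    (omitProd x n r + omitProd x n (n - r)) * pairProd x n r =
      2 * (x - n / 2) * (descPochhammer ℝ (n + 1)).eval x := by
  have h₁ := omitProd_mul_sub_eq (x := x) hr
  have h₂ := omitProd_mul_sub_eq (x := x) (Nat.sub_le n r)
  rw [Nat.cast_sub hr] at h₂
  rw [pairProd]
  linear_combination (x - n + r) * h₁ + (x - r) * h₂

lemma omitProd_add_omitProd_le (hr : r ≤ n) (hx : n < x) :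
    omitProd x n r + omitProd x n (n - r) ≤ 2 * (x - n / 2) ^ n := by
  have hf := pairProd_pos hr hx
  refine le_of_mul_le_mul_right ?_ hf
  rw [omitProd_add_omitProd_mul_pairProd hr]
  linarith [mul_descPochhammer_eval_le hr hx.le]

lemma mul_descPochhammer_eval_le_pairProd_zero_mul_one {k : ℕ} (hx : (k + 3 : ℕ) ≤ x) :
    (x - (k + 3 : ℕ) / 2) * (descPochhammer ℝ (k + 3 + 1)).eval x ≤
      pairProd x (k + 3) 0 * pairProd x (k + 3) 1 * (x - (k + 3 : ℕ) / 2) ^ (k + 1) := by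
  have hs : {0, 1, k + 2, k + 3} ⊆ range (k + 3 + 1) := by
    intro j hj; simp only [mem_insert, mem_singleton] at hj; simp only [mem_range]; omega
  have h := descPochhammer_eval_sq_le hx hs
  rw [prod_insert (by simp), prod_insert (by simp), prod_pair (show k + 2 ≠ k + 3 by omega),
    card_insert_of_notMem (by simp), card_insert_of_notMem (by simp),
    card_pair (show k + 2 ≠ k + 3 by omega),
    show k + 3 + 1 - 4 = k by omega] at h
  set M := x - (k + 3 : ℕ) / 2 with hM_def
  have hM : 0 ≤ M := by rw [hM_def]; push_cast at hx ⊢; linarith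
  clear_value M
  have e₁ : pairProd x (k + 3) (k + 2) = pairProd x (k + 3) 1 :=
    pairProd_sub_eq (n := k + 3) (r := 1) (by omega)
  have e₀ : pairProd x (k + 3) (k + 3) = pairProd x (k + 3) 0 :=
    pairProd_sub_eq (n := k + 3) (r := 0) (by omega)
  refine le_of_sq_le_sq ?_ (mul_nonneg (mul_nonneg (pairProd_nonneg (by omega) hx)
    (pairProd_nonneg (by omega) hx)) (pow_nonneg hM _))
  calc _ = M ^ 2 * (descPochhammer ℝ (k + 3 + 1)).eval x ^ 2 := by ring
    _ ≤ M ^ 2 * (pairProd x (k + 3) 0 * (pairProd x (k + 3) 1 *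
          (pairProd x (k + 3) (k + 2) * pairProd x (k + 3) (k + 3))) * (M ^ 2) ^ k) :=
        mul_le_mul_of_nonneg_left h (sq_nonneg M)
    _ = _ := by rw [e₀, e₁]; ring

lemma omitProd_one_add_omitProd_le {k : ℕ} (hx : (k + 3 : ℕ) < x) :
    omitProd x (k + 3) 1 + omitProd x (k + 3) (k + 2) ≤
      2 * pairProd x (k + 3) 0 * (x - (k + 3 : ℕ) / 2) ^ (k + 1) := by
  have hf := pairProd_pos (show 1 ≤ k + 3 by omega) hx
  refine le_of_mul_le_mul_right ?_ hf
  rw [show k + 2 = k + 3 - 1 by omega, omitProd_add_omitProd_mul_pairProd (by omega)]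
  linarith [mul_descPochhammer_eval_le_pairProd_zero_mul_one hx.le]

lemma two_mul_sum_choose_mul_omitProd (x : ℝ) (n : ℕ) :
    2 * ∑ r ∈ range (n + 1), (n.choose r : ℝ) * omitProd x n r =
      ∑ r ∈ range (n + 1), (n.choose r : ℝ) * (omitProd x n r + omitProd x n (n - r)) := by
  have hrefl : ∑ r ∈ range (n + 1), (n.choose r : ℝ) * omitProd x n (n - r) =
      ∑ r ∈ range (n + 1), (n.choose r : ℝ) * omitProd x n r := by
    rw [← sum_range_reflect]
    refine sum_congr rfl fun r hr => ?_
    have hr : r ≤ n := Nat.lt_succ_iff.mp (mem_range.mp hr)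
    rw [add_tsub_cancel_right, Nat.sub_sub_self hr, Nat.choose_symm hr]
  rw [two_mul]
  nth_rw 2 [← hrefl]
  rw [← sum_add_distrib]
  simp only [mul_add]

lemma sum_choose_mul_omitProd_le {k : ℕ} (hx : (k + 3 : ℕ) < x) :
    ∑ r ∈ range (k + 3 + 1), ((k + 3).choose r : ℝ) * omitProd x (k + 3) r ≤
      (2 * x - (k + 3 : ℕ)) ^ (k + 3) -
        ((k + 3 : ℕ) : ℝ) ^ 3 / 2 * (x - (k + 3 : ℕ) / 2) ^ (k + 1) := by
  set M := x - (k + 3 : ℕ) / 2 with hM_def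
  set d : ℕ → ℝ := fun r =>
    2 * M ^ (k + 3) - (omitProd x (k + 3) r + omitProd x (k + 3) (k + 3 - r))
  have hd : ∀ r ∈ range (k + 3 + 1), 0 ≤ ((k + 3).choose r : ℝ) * d r := fun r hr =>
    mul_nonneg (by positivity)
      (sub_nonneg.mpr (omitProd_add_omitProd_le (Nat.lt_succ_iff.mp (mem_range.mp hr)) hx))
  have hs : {1, k + 2} ⊆ range (k + 3 + 1) := by
    intro j hj; simp only [mem_insert, mem_singleton] at hj; simp only [mem_range]; omega
  have hpair := sum_le_sum_of_subset_of_nonneg hs fun r hr _ => hd r hr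
  have hd₂ : d (k + 2) = d 1 := by
    simp only [d, show k + 3 - (k + 2) = 1 by omega, show k + 3 - 1 = k + 2 by omega, add_comm]
  have hchoose₂ : (k + 3).choose (k + 2) = k + 3 := by
    rw [show k + 2 = k + 3 - 1 by omega, Nat.choose_symm (by omega), Nat.choose_one_right]
  rw [sum_pair (show 1 ≠ k + 2 by omega), hd₂, hchoose₂, Nat.choose_one_right] at hpair
  have hsplit : 2 * ∑ r ∈ range (k + 3 + 1), ((k + 3).choose r : ℝ) * omitProd x (k + 3) r =
      2 ^ (k + 3) * (2 * M ^ (k + 3)) - ∑ r ∈ range (k + 3 + 1), ((k + 3).choose r : ℝ) * d r := by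
    rw [two_mul_sum_choose_mul_omitProd, ← Nat.cast_two, ← Nat.cast_pow, ← Nat.sum_range_choose,
      Nat.cast_sum, sum_mul, ← sum_sub_distrib]
    exact sum_congr rfl fun r _ => by simp only [d]; ring
  have hd₁ : 2 * M ^ (k + 3) - 2 * pairProd x (k + 3) 0 * M ^ (k + 1) ≤ d 1 := by
    have := omitProd_one_add_omitProd_le hx
    rw [← hM_def] at this
    simp only [d, show k + 3 - 1 = k + 2 by omega]
    linarith
  have hpairProd₀ : pairProd x (k + 3) 0 = M ^ 2 - ((k + 3 : ℕ) : ℝ) ^ 2 / 4 := by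
    rw [pairProd, hM_def]; push_cast; ring
  have hnd₁ := mul_le_mul_of_nonneg_left hd₁ (by positivity : (0 : ℝ) ≤ (k + 3 : ℕ))
  rw [hpairProd₀] at hnd₁
  have h2M : 2 * x - (k + 3 : ℕ) = 2 * M := by rw [hM_def]; ring
  rw [h2M, mul_pow]
  linear_combination (1 / 2 : ℝ) * hsplit + (1 / 2 : ℝ) * hpair + hnd₁

lemma factorial_add_three_le {k : ℕ} {M : ℝ} (hM : ((k : ℝ) + 4) / 2 ≤ M) :
    ((k + 3)! : ℝ) ≤ ((k + 3 : ℕ) : ℝ) ^ 3 / 2 * M ^ (k + 1) := by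
  have h := factorial_le_pow_half (k + 2)
  push_cast at h ⊢
  have hpow : (((k : ℝ) + 4) / 2) ^ (k + 1) ≤ M ^ (k + 1) := by gcongr
  have hsq : (((k : ℝ) + 4) / 2) ^ 2 ≤ ((k : ℝ) + 3) ^ 3 / 2 := by
    nlinarith [(k.cast_nonneg : (0 : ℝ) ≤ k)]
  calc ((k + 3)! : ℝ) ≤ (((k : ℝ) + 4) / 2) ^ 2 * (((k : ℝ) + 4) / 2) ^ (k + 1) := by
        convert h using 1; ring
    _ ≤ ((k : ℝ) + 3) ^ 3 / 2 * M ^ (k + 1) := by gcongr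

lemma factorial_mul_T_add_one_le {a b : ℕ} (hb : 2 ≤ b) (hab : b < a) :
    (b ! : ℝ) * (T a b + 1) ≤ (2 * a - b) ^ b := by
  rw [mul_add, mul_one, factorial_mul_T hab]
  rcases Nat.lt_or_ge b 3 with hb₂ | hb₃
  · obtain rfl : b = 2 := by omega
    norm_num [sum_range_succ, prod_range_succ, omitProd, descPochhammer_eval_eq_prod_range]
    exact le_of_eq (by ring)
  · obtain ⟨k, rfl⟩ : ∃ k, b = k + 3 := ⟨b - 3, by omega⟩
    have hx : ((k + 3 : ℕ) : ℝ) < a := by exact_mod_cast hab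
    have hM : ((k : ℝ) + 4) / 2 ≤ a - (k + 3 : ℕ) / 2 := by
      have : (k : ℝ) + 4 ≤ a := by exact_mod_cast hab
      push_cast; linarith
    linarith [sum_choose_mul_omitProd_le hx, factorial_add_three_le hM]

/-- For all natural numbers `a > b ≥ 2`,
`(T(a,b) + 1)/2 ≤ (2a − b)^b / (2·b!)`. -/
theorem T_upper_bound (a b : ℕ) (hb : 2 ≤ b) (hab : b < a) :
    ((T a b : ℝ) + 1) / 2 ≤ (2 * (a : ℝ) - b) ^ b / (2 * (Nat.factorial b : ℝ)) := by
  rw [div_le_div_iff₀ two_pos (by positivity)]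
  linarith [factorial_mul_T_add_one_le hb hab]
end
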